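/- arXiv:1809.04590 — 14 statements merged into one kernel-verified Lean document; each statement's English description precedes it below -/
import Mathlib

section
/- Let Ω be a set, let S be a subsemigroup of Ω^Ω that contains all transformations of rank at most 2, and let T be a topology on S with respect to which S is a semitopological semigroup. Then the following are equivalent: (1) T is Hausdorff; (2) T is T₁; (3) every set of the form [σ:τ] ∩ S is open in T (i.e., T contains the topology induced on S by the pointwise topology on Ω^Ω); (4) every set of the form [σ:τ] ∩ S is closed in T. -/
open Topology

theorem stmt4 {Ω : Type*} (S : Set (Ω → Ω))
    (hSmul : ∀ f g : Ω → Ω, f ∈ S → g ∈ S → g ∘ f ∈ S)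
    (hSrank : ∀ f : Ω → Ω, Cardinal.mk (Set.range f) ≤ 2 → f ∈ S)
    (T : TopologicalSpace ↥S)
    (hsemi : ∀ s : ↥S,
      Continuous[T, T] (fun x : ↥S =>
        (⟨(s : Ω → Ω) ∘ (x : Ω → Ω), hSmul x s x.2 s.2⟩ : ↥S)) ∧
      Continuous[T, T] (fun x : ↥S =>
        (⟨(x : Ω → Ω) ∘ (s : Ω → Ω), hSmul s x s.2 x.2⟩ : ↥S))) :
    List.TFAE
      [ @T2Space ↥S T,
        @T1Space ↥S T,
        ∀ (n : ℕ) (σ τ : Fin n → Ω),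
          IsOpen[T] {x : ↥S | ∀ i, (x : Ω → Ω) (σ i) = τ i},
        ∀ (n : ℕ) (σ τ : Fin n → Ω),
          IsClosed[T] {x : ↥S | ∀ i, (x : Ω → Ω) (σ i) = τ i} ] := by
  letI := T
  classical
  have hconst : ∀ b : Ω, (fun _ : Ω => b) ∈ S := by
    intro b
    apply hSrank
    calc Cardinal.mk (Set.range fun _ : Ω => b)
        ≤ Cardinal.mk ({b} : Set Ω) := by
          apply Cardinal.mk_le_mk_of_subset
          rintro _ ⟨t, rfl⟩; exact rfl
      _ ≤ 2 := by rw [Cardinal.mk_singleton]; norm_num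
  tfae_have 1 → 2
  · intro h
    exact inferInstance
  tfae_have 2 → 4
  · intro h n σ τ
    have heq : {x : ↥S | ∀ i, (x : Ω → Ω) (σ i) = τ i} =
        ⋂ i, {x : ↥S | (x : Ω → Ω) (σ i) = τ i} := by
      ext x; simp [Set.mem_iInter]
    rw [heq]
    refine isClosed_iInter fun i => ?_
    have hcont := (hsemi ⟨fun _ => σ i, hconst (σ i)⟩).2
    have hsing : IsClosed ({(⟨fun _ => τ i, hconst (τ i)⟩ : ↥S)} : Set ↥S) :=
      isClosed_singleton
    have heq2 : {x : ↥S | (x : Ω → Ω) (σ i) = τ i} =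
        (fun x : ↥S => (⟨(x : Ω → Ω) ∘ (fun _ => σ i), hSmul _ _ (hconst (σ i)) x.2⟩ : ↥S))
          ⁻¹' {(⟨fun _ => τ i, hconst (τ i)⟩ : ↥S)} := by
      ext x
      simp only [Set.mem_preimage, Set.mem_singleton_iff, Set.mem_setOf_eq, Subtype.ext_iff]
      constructor
      · intro hx; funext t; exact hx
      · intro hx; exact congrFun hx (σ i)
    rw [heq2]
    exact hsing.preimage hcont
  tfae_have 4 → 3
  · intro h n σ τ
    have heq : {x : ↥S | ∀ i, (x : Ω → Ω) (σ i) = τ i} =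
        ⋂ i, {x : ↥S | (x : Ω → Ω) (σ i) = τ i} := by
      ext x; simp [Set.mem_iInter]
    rw [heq]
    refine isOpen_iInter_of_finite fun i => ?_
    by_cases hc : ∀ c : Ω, c = τ i
    · have : {x : ↥S | (x : Ω → Ω) (σ i) = τ i} = Set.univ := by
        ext x; simp [hc ((x : Ω → Ω) (σ i))]
      rw [this]; exact isOpen_univ
    · push_neg at hc
      obtain ⟨c, hcne⟩ := hc
      set q : Ω → Ω := fun ω => if ω = τ i then τ i else c with hq
      have hqS : q ∈ S := by
        apply hSrank
        calc Cardinal.mk (Set.range q)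
            ≤ Cardinal.mk ({τ i, c} : Set Ω) := by
              apply Cardinal.mk_le_mk_of_subset
              rintro _ ⟨t, rfl⟩
              simp only [hq]
              split_ifs
              · exact Set.mem_insert _ _
              · exact Set.mem_insert_of_mem _ rfl
          _ ≤ Cardinal.mk ({c} : Set Ω) + 1 := Cardinal.mk_insert_le
          _ ≤ 2 := by rw [Cardinal.mk_singleton]; norm_num
      have hcont := (hsemi ⟨q, hqS⟩).1
      have hclosed := h 1 (fun _ => σ i) (fun _ => c)
      have heq2 : {x : ↥S | (x : Ω → Ω) (σ i) = τ i} =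
          ((fun x : ↥S => (⟨q ∘ (x : Ω → Ω), hSmul _ _ x.2 hqS⟩ : ↥S)) ⁻¹'
            {y : ↥S | ∀ j : Fin 1, (y : Ω → Ω) ((fun _ => σ i) j) = (fun _ => c) j})ᶜ := by
        ext x
        simp only [Set.mem_compl_iff, Set.mem_preimage, Set.mem_setOf_eq, Fin.forall_fin_one,
          Function.comp_apply]
        constructor
        · intro hx hcon
          rw [hx] at hcon
          simp only [hq, if_pos rfl] at hcon
          exact hcne hcon.symm
        · intro hcon
          by_contra hx
          apply hcon
          simp only [hq, if_neg hx]
      rw [heq2]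
      exact (hclosed.preimage hcont).isOpen_compl
  tfae_have 3 → 1
  · intro h
    constructor
    intro x y hxy
    have hex : ∃ ω, (x : Ω → Ω) ω ≠ (y : Ω → Ω) ω := by
      by_contra hcon
      push_neg at hcon
      exact hxy (Subtype.ext (funext hcon))
    obtain ⟨ω, hω⟩ := hex
    have hopen : ∀ b : Ω, IsOpen {z : ↥S | (z : Ω → Ω) ω = b} := by
      intro b
      have := h 1 (fun _ => ω) (fun _ => b)
      simpa [Fin.forall_fin_one] using this
    refine ⟨{z : ↥S | (z : Ω → Ω) ω = (x : Ω → Ω) ω},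
      {z : ↥S | (z : Ω → Ω) ω = (y : Ω → Ω) ω},
      hopen _, hopen _, rfl, rfl, ?_⟩
    rw [Set.disjoint_left]
    intro z hz hz'
    exact hω (hz ▸ hz' ▸ rfl)
  tfae_finish
end

section
/- Let Ω be a set and let P denote the pointwise topology on Ω^Ω. Suppose that Ω^Ω is a semitopological semigroup with respect to a T₁ topology T, and that the subspace topology that T induces on the symmetric group Sym(Ω) (the group of all bijections of Ω) is contained in the pointwise topology on Sym(Ω) (the subspace topology induced by P). Then T = P. -/
open Topology

/-- The pointwise (product of discrete) topology on `Ω → Ω`. -/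
def pointwiseTop (Ω : Type*) : TopologicalSpace (Ω → Ω) :=
  @Pi.topologicalSpace Ω (fun _ => Ω) (fun _ => ⊥)

theorem stmt5 {Ω : Type*} (T : TopologicalSpace (Ω → Ω))
    (hT1 : @T1Space (Ω → Ω) T)
    (hsemi : ∀ s : Ω → Ω,
      Continuous[T, T] (fun x : Ω → Ω => s ∘ x) ∧
      Continuous[T, T] (fun x : Ω → Ω => x ∘ s))
    (hsub : ∀ U : Set {f : Ω → Ω // Function.Bijective f},
      IsOpen[T.induced Subtype.val] U →
      IsOpen[(pointwiseTop Ω).induced Subtype.val] U) :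
    T = pointwiseTop Ω := by
  classical
  letI : TopologicalSpace Ω := ⊥
  haveI : DiscreteTopology Ω := ⟨rfl⟩
  cases finite_or_infinite Ω with
  | inl hfin =>
    have h1 : T = ⊥ := by
      letI := T
      haveI := hT1
      haveI : DiscreteTopology (Ω → Ω) := inferInstance
      exact DiscreteTopology.eq_bot
    have h2 : pointwiseTop Ω = ⊥ := by
      letI : TopologicalSpace (Ω → Ω) := pointwiseTop Ω
      haveI : DiscreteTopology (Ω → Ω) :=
        show @DiscreteTopology (Ω → Ω) (@Pi.topologicalSpace Ω (fun _ => Ω) (fun _ => ⊥))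
          from inferInstance
      exact DiscreteTopology.eq_bot
    rw [h1, h2]
  | inr hinf =>
    haveI := hinf
    -- Direction 1: every pointwise-open set is T-open.
    have key1 : ∀ (a b : Ω), IsOpen[T] {f : Ω → Ω | f a = b} := by
      intro a b
      obtain ⟨q, hq⟩ := exists_ne b
      set s : Ω → Ω := fun y => if y = b then b else q with hs
      have hc1 : Continuous[T, T] (fun g : Ω → Ω => s ∘ (g ∘ fun _ => a)) :=
        (hsemi s).1.comp (hsemi (fun _ => a)).2
      have hcl : IsClosed[T] {(fun _ : Ω => q)} :=
        @isClosed_singleton _ T hT1 _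
      have heq : {f : Ω → Ω | f a = b}
          = (fun g : Ω → Ω => s ∘ (g ∘ fun _ => a)) ⁻¹' {(fun _ : Ω => q)}ᶜ := by
        ext f
        simp only [Set.mem_setOf_eq, Set.mem_preimage, Set.mem_compl_iff,
          Set.mem_singleton_iff]
        constructor
        · intro hfa hcon
          have h := congrFun hcon a
          simp only [Function.comp, hfa, hs, if_pos rfl] at h
          exact hq h.symm
        · intro h
          by_contra hne
          apply h
          funext x
          simp only [Function.comp, hs]
          rw [if_neg hne]
      rw [heq]
      exact hc1.isOpen_preimage _ hcl.isOpen_compl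
    refine le_antisymm ?_ ?_
    · -- T ≤ pointwiseTop
      show T ≤ ⨅ a, TopologicalSpace.induced (fun f : Ω → Ω => f a) ⊥
      refine le_iInf fun a => ?_
      rw [← @continuous_iff_le_induced _ _ _ T ⊥]
      rw [@continuous_def _ _ T ⊥]
      intro S _
      have hS : (fun f : Ω → Ω => f a) ⁻¹' S = ⋃ b ∈ S, {f : Ω → Ω | f a = b} := by
        ext f; simp
      rw [hS]
      exact @isOpen_biUnion _ _ T _ _ (fun b _ => key1 a b)
    · -- pointwiseTop ≤ T
      letI : TopologicalSpace (Ω → Ω) := pointwiseTop Ω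
      obtain ⟨β⟩ : Nonempty (Ω ≃ (Ω ⊕ Ω × Ω)) := by
        rw [← Cardinal.eq, Cardinal.mk_sum, Cardinal.mk_prod, Cardinal.lift_id,
          Cardinal.lift_id, Cardinal.mul_eq_self (Cardinal.infinite_iff.mp ‹_›),
          Cardinal.add_eq_self (Cardinal.infinite_iff.mp ‹_›)]
      set σf : (Ω → Ω) → (Ω ⊕ Ω × Ω) → (Ω ⊕ Ω × Ω) :=
        fun g l => match l with
          | .inl x => .inr (g x, x)
          | .inr (a, x) => if a = g x then .inl x else .inr (a, x) with hσ
      have hinv : ∀ g, Function.Involutive (σf g) := by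
        intro g l
        match l with
        | .inl x => simp [hσ]
        | .inr (a, x) =>
          by_cases h : a = g x
          · simp [hσ, h]
          · simp [hσ, h]
      set e : (Ω → Ω) → (Ω → Ω) := fun g x => β.symm (σf g (β x)) with he
      have hbij : ∀ g, Function.Bijective (e g) := by
        intro g
        exact β.symm.bijective.comp ((hinv g).bijective.comp β.bijective)
      set u : Ω → Ω := fun x => Sum.elim id Prod.fst (β x) with hu
      set v : Ω → Ω := fun x => β.symm (.inl x) with hv
      have hrec : ∀ g : Ω → Ω, u ∘ (e g ∘ v) = g := by
        intro g
        funext x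
        simp [hu, hv, he, hσ, Function.comp]
      rw [TopologicalSpace.le_def]
      intro U hU
      show IsOpen U
      rw [isOpen_iff_forall_mem_open]
      intro f hf
      have hcont_uv : Continuous[T, T] (fun h : Ω → Ω => u ∘ (h ∘ v)) :=
        @Continuous.comp _ _ _ T T T _ _ (hsemi u).1 (hsemi v).2
      set V : Set (Ω → Ω) := (fun h : Ω → Ω => u ∘ (h ∘ v)) ⁻¹' U with hVdef
      have hVopen : IsOpen[T] V :=
        @Continuous.isOpen_preimage _ _ T T _ hcont_uv U hU
      have hefV : e f ∈ V := by
        show u ∘ (e f ∘ v) ∈ U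
        rw [hrec f]; exact hf
      have h2 : IsOpen[T.induced Subtype.val]
          (Subtype.val ⁻¹' V : Set {f : Ω → Ω // Function.Bijective f}) :=
        ⟨V, hVopen, rfl⟩
      obtain ⟨W, hWopen, hWeq⟩ := hsub _ h2
      have hefW : e f ∈ W := by
        have : (⟨e f, hbij f⟩ : {f : Ω → Ω // Function.Bijective f}) ∈ Subtype.val ⁻¹' W := by
          rw [hWeq]; exact hefV
        exact this
      have hWopen' : IsOpen W := hWopen
      obtain ⟨I, u', hIu, hsubW⟩ := isOpen_pi_iff.mp hWopen' (e f) hefW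
      set A : Finset Ω := I.image (fun a => Sum.elim id Prod.snd (β a)) with hA
      refine ⟨{g : Ω → Ω | ∀ y ∈ A, g y = f y}, ?_, ?_, fun y hy => rfl⟩
      · -- subset of U
        intro g hg
        have hagree : ∀ a ∈ I, e g a = e f a := by
          intro a ha
          have hy : Sum.elim id Prod.snd (β a) ∈ A :=
            Finset.mem_image_of_mem _ ha
          have hgy := hg _ hy
          show β.symm (σf g (β a)) = β.symm (σf f (β a))
          cases hβ : β a with
          | inl y =>
            rw [hβ] at hgy
            simp only [Sum.elim_inl, id_eq] at hgy
            simp [hσ, hgy]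
          | inr p =>
            obtain ⟨b, y⟩ := p
            rw [hβ] at hgy
            simp only [Sum.elim_inr] at hgy
            simp [hσ, hgy]
        have hegW : e g ∈ W := by
          apply hsubW
          intro a ha
          show e g a ∈ u' a
          exact (hagree a ha) ▸ (hIu a ha).2
        have hegV : e g ∈ V := by
          have : (⟨e g, hbij g⟩ : {f : Ω → Ω // Function.Bijective f}) ∈ Subtype.val ⁻¹' V := by
            rw [← hWeq]; exact hegW
          exact this
        have : u ∘ (e g ∘ v) ∈ U := hegV
        rwa [hrec g] at this
      · -- openness
        have : {g : Ω → Ω | ∀ y ∈ A, g y = f y} = (↑A : Set Ω).pi (fun y => {f y}) := by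
          ext g; simp [Set.mem_pi]
        rw [this]
        exact isOpen_set_pi A.finite_toSet (fun y _ => isOpen_discrete _)
end

section
/- Let Ω be a countably infinite set. Then the pointwise topology is the only Polish topology on Ω^Ω with respect to which Ω^Ω is a semitopological semigroup; that is, if T is a Polish (separable and completely metrizable) topology on Ω^Ω making Ω^Ω a semitopological semigroup, then T equals the pointwise topology. -/
open Topology

namespace Stmt6Aux

open Set Function Filter TopologicalSpace

set_option linter.unusedSectionVars false

/-- Key combinatorial lemma: a "two-sided translation" `z ↦ g ∘ z ∘ h` with `g` having a
right inverse and `h` injective maps each basic pointwise neighbourhood of any `z₀` onto a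
basic pointwise neighbourhood of `g ∘ z₀ ∘ h`. -/
theorem keyOpen {Ω : Type*} (g h s : Ω → Ω) (hgs : ∀ v, g (s v) = v)
    (hinj : Function.Injective h)
    (z₀ : Ω → Ω) (F : Finset Ω) (y : Ω → Ω) (hy : ∀ a, h a ∈ F → y a = g (z₀ (h a))) :
    ∃ z : Ω → Ω, (∀ c ∈ F, z c = z₀ c) ∧ g ∘ z ∘ h = y := by
  classical
  refine ⟨fun c => if c ∈ F then z₀ c else if hc : ∃ a, h a = c then s (y hc.choose) else z₀ c,
    fun c hc => by simp [hc], ?_⟩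
  funext a
  simp only [Function.comp_apply]
  by_cases hF : h a ∈ F
  · simp [hF, (hy a hF).symm]
  · have hex : ∃ b, h b = h a := ⟨a, rfl⟩
    have : hex.choose = a := hinj hex.choose_spec
    simp [hF, hex, this, hgs]

/-- Construction of a map `g` with right inverse `s` such that `g` composed with the
"even" embedding `a ↦ e.symm (2 * e a)` is a prescribed map `x`. -/
theorem gs_exists {Ω : Type*} (e : Ω ≃ ℕ) (x : Ω → Ω) :
    ∃ g s : Ω → Ω, (∀ v, g (s v) = v) ∧ (∀ a, g (e.symm (2 * e a)) = x a) := by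
  classical
  refine ⟨fun c => if Even (e c) then x (e.symm (e c / 2)) else e.symm (e c / 2),
    fun v => e.symm (2 * e v + 1), fun v => ?_, fun a => ?_⟩
  · have h1 : e (e.symm (2 * e v + 1)) = 2 * e v + 1 := e.apply_symm_apply _
    have h2 : ¬ Even (2 * e v + 1) := by
      rw [Nat.even_iff]; omega
    have h3 : (2 * e v + 1) / 2 = e v := by omega
    simp only [h1, h2, if_false, h3, e.symm_apply_apply]
  · have h1 : e (e.symm (2 * e a)) = 2 * e a := e.apply_symm_apply _
    have h2 : Even (2 * e a) := even_two_mul _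
    have h3 : (2 * e a) / 2 = e a := by omega
    simp only [h1, h2, if_true, h3, e.symm_apply_apply]

/-- A countable union of meagre sets is meagre. -/
theorem meager_sUnion {X : Type*} [TopologicalSpace X] {S : Set (Set X)} (hc : S.Countable)
    (h : ∀ s ∈ S, IsMeagre s) : IsMeagre (⋃₀ S) := by
  unfold IsMeagre at *
  rw [Set.compl_sUnion]
  exact (countable_sInter_mem (hc.image _)).2 (by rintro t ⟨u, hu, rfl⟩; exact h u hu)

theorem t2_of_polish {X : Type*} {p : TopologicalSpace X} (hp : @PolishSpace X p) :
    @T2Space X p := by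
  letI := p; haveI := hp
  letI := upgradeIsCompletelyMetrizable X
  infer_instance

theorem regular_of_polish {X : Type*} {p : TopologicalSpace X} (hp : @PolishSpace X p) :
    @RegularSpace X p := by
  letI := p; haveI := hp
  letI := upgradeIsCompletelyMetrizable X
  infer_instance

/-- Lusin–Suslin: a set open in a finer Polish topology is Borel for a coarser Polish
topology. -/
theorem tOpen_pwBorel {X : Type*} {t p : TopologicalSpace X} (ht : @PolishSpace X t)
    (hp : @PolishSpace X p) (hle : t ≤ p) {A : Set X} (hA : IsOpen[t] A) :
    @MeasurableSet X (@borel X p) A := by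
  have hemb : @MeasurableEmbedding X X (@borel X t) (@borel X p) id :=
    @Continuous.measurableEmbedding X X (@borel X p) p (t2_of_polish hp) id
      (@BorelSpace.mk X p (@borel X p) rfl) t ht (@borel X t) (@BorelSpace.mk X t (@borel X t) rfl)
      (continuous_id_of_le hle) Function.injective_id
  have hAt : @MeasurableSet X (@borel X t) A :=
    @IsOpen.measurableSet X A t (@borel X t)
      (@BorelSpace.opensMeasurable X t (@borel X t) (@BorelSpace.mk X t (@borel X t) rfl)) hA
  have := @MeasurableEmbedding.measurableSet_image' X X (@borel X t) (@borel X p) id hemb A hAt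
  simpa using this

/-- Every set open in a finer Polish topology has the Baire property w.r.t. a coarser
Polish topology. -/
theorem tOpen_pwBP {X : Type*} {t p : TopologicalSpace X} (ht : @PolishSpace X t)
    (hp : @PolishSpace X p) (hle : t ≤ p) {A : Set X} (hA : IsOpen[t] A) :
    ∃ W : Set X, IsOpen[p] W ∧ @IsMeagre X p (symmDiff A W) := by
  letI := p
  have hbm : BaireMeasurableSet A :=
    @MeasurableSet.baireMeasurableSet X p A (@borel X p) (@BorelSpace.mk X p (@borel X p) rfl)
      (tOpen_pwBorel ht hp hle hA)
  obtain ⟨W, hWo, hWe⟩ := hbm.residualEq_isOpen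
  refine ⟨W, hWo, ?_⟩
  have hsub : symmDiff A W ⊆ {x | ¬ (x ∈ A ↔ x ∈ W)} := by
    intro x hx
    rcases hx with h1 | h2
    · exact fun h => h1.2 (h.1 h1.1)
    · exact fun h => h2.2 (h.2 h2.1)
  refine IsMeagre.mono hsub ?_
  unfold IsMeagre
  have hc : {x | ¬(x ∈ A ↔ x ∈ W)}ᶜ = {x | (x ∈ A) ↔ (x ∈ W)} := by ext x; simp
  rw [hc]
  filter_upwards [hWe] with x hx
  have hx' : (x ∈ A) = (x ∈ W) := hx
  simp only [Set.mem_setOf_eq, hx']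

/-- Basic pointwise neighbourhood. -/
def box {Ω : Type*} (z₀ : Ω → Ω) (F : Finset Ω) : Set (Ω → Ω) := {z | ∀ c ∈ F, z c = z₀ c}

theorem mem_box_self {Ω : Type*} (z₀ : Ω → Ω) (F : Finset Ω) : z₀ ∈ box z₀ F := fun _ _ => rfl

/-- Monotonicity of meagreness, with explicit topology. -/
theorem meagre_mono {X : Type*} {p : TopologicalSpace X} {s t : Set X}
    (hs : @IsMeagre X p s) (hts : t ⊆ s) : @IsMeagre X p t := by
  letI := p
  exact hs.mono hts

section PW

variable {Ω : Type*} [TopologicalSpace Ω] [DiscreteTopology Ω]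

theorem isOpen_box (z₀ : Ω → Ω) (F : Finset Ω) : IsOpen (box z₀ F) := by
  have : box z₀ F = (↑F : Set Ω).pi (fun c => {z₀ c}) := by
    ext z; simp [box, Set.mem_pi]
  rw [this]
  exact isOpen_set_pi F.finite_toSet (fun c _ => isOpen_discrete _)

theorem exists_box_subset {O : Set (Ω → Ω)} (hO : IsOpen O) {z₀ : Ω → Ω} (hz : z₀ ∈ O) :
    ∃ F : Finset Ω, box z₀ F ⊆ O := by
  obtain ⟨I, u, hu, hsub⟩ := isOpen_pi_iff.1 hO z₀ hz
  exact ⟨I, fun z hz' => hsub (fun i hi => (hz' i hi) ▸ (hu i hi).2)⟩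

theorem K_pw_continuous (g h : Ω → Ω) : Continuous (fun z : Ω → Ω => g ∘ z ∘ h) :=
  continuous_pi fun a => by
    have : (fun z : Ω → Ω => (g ∘ z ∘ h) a) = (fun v => g v) ∘ (fun z : Ω → Ω => z (h a)) := rfl
    rw [this]
    exact continuous_of_discreteTopology.comp (continuous_apply (h a))

theorem dense_K_preimage {g h s : Ω → Ω} (hgs : ∀ v, g (s v) = v)
    (hinj : Function.Injective h) {D : Set (Ω → Ω)} (hD : Dense D) :
    Dense ((fun z : Ω → Ω => g ∘ z ∘ h) ⁻¹' D) := by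
  classical
  rw [dense_iff_inter_open]
  rintro O hO ⟨z₀, hz₀⟩
  obtain ⟨F, hbox⟩ := exists_box_subset hO hz₀
  obtain ⟨y, hyW, hyD⟩ := hD.inter_open_nonempty _
    (isOpen_box (g ∘ z₀ ∘ h) (F.preimage h hinj.injOn)) ⟨_, mem_box_self _ _⟩
  obtain ⟨z, hzF, hKz⟩ := keyOpen g h s hgs hinj z₀ F y
    (fun a ha => hyW a (Finset.mem_preimage.2 ha))
  exact ⟨z, hbox (fun c hc => hzF c hc), by simp only [mem_preimage, hKz]; exact hyD⟩

theorem residual_K_preimage {g h s : Ω → Ω} (hgs : ∀ v, g (s v) = v)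
    (hinj : Function.Injective h) {A : Set (Ω → Ω)} (hA : A ∈ residual (Ω → Ω)) :
    (fun z : Ω → Ω => g ∘ z ∘ h) ⁻¹' A ∈ residual (Ω → Ω) := by
  obtain ⟨S, hSo, hSd, hSc, hsub⟩ := mem_residual_iff.1 hA
  have hmem : ∀ t ∈ S, (fun z : Ω → Ω => g ∘ z ∘ h) ⁻¹' t ∈ residual (Ω → Ω) := fun t ht =>
    residual_of_dense_open ((hSo t ht).preimage (K_pw_continuous g h))
      (dense_K_preimage hgs hinj (hSd t ht))
  refine mem_of_superset ((countable_bInter_mem hSc).2 hmem) ?_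
  intro z hz
  exact hsub (fun t ht => (mem_iInter₂.1 hz) t ht)

theorem isMeagre_K_preimage {g h s : Ω → Ω} (hgs : ∀ v, g (s v) = v)
    (hinj : Function.Injective h) {A : Set (Ω → Ω)} (hA : IsMeagre A) :
    IsMeagre ((fun z : Ω → Ω => g ∘ z ∘ h) ⁻¹' A) := by
  unfold IsMeagre at hA ⊢
  rw [← Set.preimage_compl]
  exact residual_K_preimage hgs hinj hA

theorem surjective_residual [Countable Ω] [Infinite Ω] :
    {z : Ω → Ω | Surjective z} ∈ residual (Ω → Ω) := by
  classical
  have hrw : {z : Ω → Ω | Surjective z} = ⋂ v, ⋃ a, {z : Ω → Ω | z a = v} := by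
    ext z; simp [Surjective]
  rw [hrw]
  refine countable_iInter_mem.2 fun v => residual_of_dense_open
    (isOpen_iUnion fun a => by
      have : {z : Ω → Ω | z a = v} = (fun z : Ω → Ω => z a) ⁻¹' {v} := rfl
      rw [this]; exact IsOpen.preimage (continuous_apply a) (isOpen_discrete {v})) ?_
  rw [dense_iff_inter_open]
  rintro O hO ⟨z₀, hz₀⟩
  obtain ⟨F, hbox⟩ := exists_box_subset hO hz₀
  obtain ⟨a, ha⟩ := Infinite.exists_notMem_finset F
  refine ⟨Function.update z₀ a v, hbox ?_, mem_iUnion.2 ⟨a, by simp⟩⟩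
  intro c hc
  have hca : c ≠ a := fun hca => ha (hca ▸ hc)
  simp [Function.update_of_ne hca]

end PW

/-- Direction 1: any Hausdorff semitopological semigroup topology on `Ω → Ω` refines the
pointwise topology. -/
theorem dir1 {Ω : Type*} [Infinite Ω] (T : TopologicalSpace (Ω → Ω))
    (hT2 : @T2Space (Ω → Ω) T)
    (hsemi : ∀ s : Ω → Ω,
      Continuous[T, T] (fun x : Ω → Ω => s ∘ x) ∧
      Continuous[T, T] (fun x : Ω → Ω => x ∘ s)) :
    T ≤ pointwiseTop Ω := by
  classical
  have hS : ∀ a b : Ω, IsOpen[T] {x : Ω → Ω | x a = b} := by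
    intro a b
    obtain ⟨b', hb'⟩ := exists_ne b
    set u : Ω → Ω := fun c => if c = b then b' else c with hu
    have f1 : Continuous[T, T] (fun x : Ω → Ω => x ∘ (fun _ : Ω => a)) := (hsemi _).2
    have f2 : Continuous[T, T] (fun x : Ω → Ω => u ∘ (x ∘ (fun _ : Ω => a))) :=
      Continuous.comp (hsemi u).1 f1
    have heq : {x : Ω → Ω | x a = b} =
        {x : Ω → Ω | (fun x : Ω → Ω => x ∘ (fun _ : Ω => a)) x ≠
          (fun x : Ω → Ω => u ∘ (x ∘ (fun _ : Ω => a))) x} := by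
      ext x
      simp only [Set.mem_setOf_eq, Ne, funext_iff, Function.comp_apply]
      constructor
      · intro hxa hall
        obtain ⟨z⟩ : Nonempty Ω := inferInstance
        have h1 : x a = u (x a) := hall z
        rw [hxa] at h1
        have hub : u b = b' := by simp [hu]
        rw [hub] at h1
        exact hb' h1.symm
      · intro hne
        by_contra hxa
        apply hne
        intro z
        have : u (x a) = x a := by simp [hu, hxa]
        rw [this]
    rw [heq]
    letI := T
    haveI := hT2
    exact isOpen_ne_fun f1 f2
  show T ≤ ⨅ a : Ω, TopologicalSpace.induced (fun x : Ω → Ω => x a) ⊥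
  refine le_iInf fun a => ?_
  rw [← continuous_iff_le_induced]
  refine continuous_def.2 fun s _ => ?_
  have : (fun x : Ω → Ω => x a) ⁻¹' s = ⋃ b ∈ s, {x : Ω → Ω | x a = b} := by
    ext x; simp
  rw [this]
  exact isOpen_biUnion fun b _ => hS a b

end Stmt6Aux

open Set Function Filter TopologicalSpace in
theorem stmt6 {Ω : Type*} [Countable Ω] [Infinite Ω]
    (T : TopologicalSpace (Ω → Ω))
    (hPolish : @PolishSpace (Ω → Ω) T)
    (hsemi : ∀ s : Ω → Ω,
      Continuous[T, T] (fun x : Ω → Ω => s ∘ x) ∧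
      Continuous[T, T] (fun x : Ω → Ω => x ∘ s)) :
    T = pointwiseTop Ω := by
  classical
  -- In this proof, the ambient topology on `Ω → Ω` (for unbracketed notation) is `T`,
  -- since `T` is a local instance. Pointwise-topology notions are written explicitly.
  haveI := hPolish
  haveI hT2 : T2Space (Ω → Ω) := Stmt6Aux.t2_of_polish hPolish
  haveI hreg : RegularSpace (Ω → Ω) := Stmt6Aux.regular_of_polish hPolish
  have hdisc : @DiscreteTopology Ω ⊥ := @DiscreteTopology.mk Ω ⊥ rfl
  have hpwP : @PolishSpace (Ω → Ω) (pointwiseTop Ω) := by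
    letI : TopologicalSpace Ω := ⊥
    haveI := hdisc
    show @PolishSpace (Ω → Ω) (@Pi.topologicalSpace Ω (fun _ => Ω) (fun _ => ⊥))
    haveI : @IsCompletelyMetrizableSpace (Ω → Ω)
      (@Pi.topologicalSpace Ω (fun _ => Ω) (fun _ => ⊥)) := inferInstance
    haveI : @SeparableSpace (Ω → Ω)
      (@Pi.topologicalSpace Ω (fun _ => Ω) (fun _ => ⊥)) := inferInstance
    infer_instance
  have hBaire : @BaireSpace (Ω → Ω) (pointwiseTop Ω) := by
    letI := @upgradeIsCompletelyMetrizable (Ω → Ω) (pointwiseTop Ω) _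
    infer_instance
  have hle : T ≤ pointwiseTop Ω := Stmt6Aux.dir1 T hT2 hsemi
  have hdir1' : ∀ V : Set (Ω → Ω), IsOpen[pointwiseTop Ω] V → IsOpen V :=
    isOpen_implies_isOpen_iff.2 hle
  -- countable basis for T
  obtain ⟨B, hBc, -, hBbasis⟩ := TopologicalSpace.exists_countable_basis (Ω → Ω)
  -- the union of all pointwise-meagre basic T-open sets
  set N : Set (Ω → Ω) := ⋃₀ {U | U ∈ B ∧ @IsMeagre _ (pointwiseTop Ω) U} with hN
  have hNm : @IsMeagre _ (pointwiseTop Ω) N :=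
    @Stmt6Aux.meager_sUnion _ (pointwiseTop Ω) _ (hBc.mono (fun U hU => hU.1))
      (fun U hU => hU.2)
  have hNopenT : IsOpen N := isOpen_sUnion (fun U hU => hBbasis.isOpen hU.1)
  have hNsub : ∀ U : Set (Ω → Ω), IsOpen U → @IsMeagre _ (pointwiseTop Ω) U → U ⊆ N := by
    intro U hUo hUm x hx
    obtain ⟨V, hVB, hxV, hVU⟩ := hBbasis.exists_subset_of_mem_open hx hUo
    exact ⟨V, ⟨hVB, Stmt6Aux.meagre_mono hUm hVU⟩, hxV⟩
  -- fix an equivalence with ℕ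
  obtain ⟨dΩ⟩ := nonempty_denumerable Ω
  let e : Ω ≃ ℕ := @Denumerable.eqv Ω dΩ
  have hEveninj : Function.Injective (fun a : Ω => e.symm (2 * e a)) := by
    intro a b hab
    have h1 := e.symm.injective hab
    have h2 : (2 : ℕ) * e a = 2 * e b := h1
    exact e.injective (by omega)
  -- N is empty
  have hNempty : N = ∅ := by
    by_contra hne
    obtain ⟨x, hx⟩ := Set.nonempty_iff_ne_empty.2 hne
    obtain ⟨g, s, hgs, hgx⟩ := Stmt6Aux.gs_exists e x
    set hE : Ω → Ω := fun a => e.symm (2 * e a) with hhE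
    have hKT : Continuous (fun z : Ω → Ω => g ∘ z ∘ hE) :=
      Continuous.comp (hsemi g).1 (hsemi hE).2
    have hKid : (fun z : Ω → Ω => g ∘ z ∘ hE) id = x := by
      funext a
      exact hgx a
    have hKN : @IsMeagre _ (pointwiseTop Ω) ((fun z : Ω → Ω => g ∘ z ∘ hE) ⁻¹' N) :=
      @Stmt6Aux.isMeagre_K_preimage Ω ⊥ hdisc g hE s hgs hEveninj N hNm
    have hKNo : IsOpen ((fun z : Ω → Ω => g ∘ z ∘ hE) ⁻¹' N) :=
      hKT.isOpen_preimage N hNopenT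
    have hidN : id ∈ N := hNsub _ hKNo hKN (by
      show (fun z : Ω → Ω => g ∘ z ∘ hE) id ∈ N
      rw [hKid]; exact hx)
    -- every surjection lies in N
    have hsurjN : {z : Ω → Ω | Function.Surjective z} ⊆ N := by
      intro σ hσ
      set h' : Ω → Ω := Function.surjInv hσ with hh'
      have hinj' : Function.Injective h' := Function.injective_surjInv hσ
      have hK'T : Continuous (fun z : Ω → Ω => (id : Ω → Ω) ∘ z ∘ h') :=
        Continuous.comp (hsemi (id : Ω → Ω)).1 (hsemi h').2
      have hK'N : @IsMeagre _ (pointwiseTop Ω)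
          ((fun z : Ω → Ω => (id : Ω → Ω) ∘ z ∘ h') ⁻¹' N) :=
        @Stmt6Aux.isMeagre_K_preimage Ω ⊥ hdisc id h' id (fun v => rfl) hinj' N hNm
      have hK'No : IsOpen ((fun z : Ω → Ω => (id : Ω → Ω) ∘ z ∘ h') ⁻¹' N) :=
        hK'T.isOpen_preimage N hNopenT
      have hKσ : (fun z : Ω → Ω => (id : Ω → Ω) ∘ z ∘ h') σ = id := by
        funext b
        exact Function.surjInv_eq hσ b
      exact hNsub _ hK'No hK'N (by
        show (fun z : Ω → Ω => (id : Ω → Ω) ∘ z ∘ h') σ ∈ N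
        rw [hKσ]; exact hidN)
    have hsm : @IsMeagre _ (pointwiseTop Ω) {z : Ω → Ω | Function.Surjective z} :=
      Stmt6Aux.meagre_mono hNm hsurjN
    have h1 : {z : Ω → Ω | Function.Surjective z} ∈ @residual _ (pointwiseTop Ω) :=
      @Stmt6Aux.surjective_residual Ω ⊥ hdisc _ _
    have h2 : {z : Ω → Ω | Function.Surjective z}ᶜ ∈ @residual _ (pointwiseTop Ω) := hsm
    have h3 : (∅ : Set (Ω → Ω)) ∈ @residual _ (pointwiseTop Ω) := by
      have := Filter.inter_mem h1 h2
      simpa using this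
    have hdense : @Dense _ (pointwiseTop Ω) (∅ : Set (Ω → Ω)) :=
      @dense_of_mem_residual _ (pointwiseTop Ω) hBaire _ h3
    obtain ⟨w, hw⟩ := @Dense.nonempty _ (pointwiseTop Ω) _ _ hdense
    exact hw
  have hnonmeager : ∀ U : Set (Ω → Ω), IsOpen U → U.Nonempty →
      ¬ @IsMeagre _ (pointwiseTop Ω) U := by
    rintro U hUo ⟨w, hw⟩ hUm
    have := hNsub U hUo hUm hw
    rw [hNempty] at this
    exact this
  -- the core Baire-property estimate
  have hcore : ∀ Ui Uj : Set (Ω → Ω), IsOpen Ui → IsOpen Uj →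
      closure Uj ⊆ Ui → @IsMeagre _ (pointwiseTop Ω) (Uj \ @interior _ (pointwiseTop Ω) Ui) := by
    intro Ui Uj hUio hUjo hcl
    obtain ⟨W, hWo, hWm⟩ := Stmt6Aux.tOpen_pwBP hPolish hpwP hle hUjo
    have hWsub : W ⊆ closure Uj := by
      intro y' hy'
      rw [mem_closure_iff]
      intro Q hQo hyQ
      have hRo : IsOpen (Q ∩ W) := hQo.inter (hdir1' W hWo)
      have hRne : (Q ∩ W).Nonempty := ⟨y', hyQ, hy'⟩
      have hnm := hnonmeager _ hRo hRne
      have hex : ((Q ∩ W) \ symmDiff Uj W).Nonempty := by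
        by_contra hno
        rw [Set.not_nonempty_iff_eq_empty, Set.diff_eq_empty] at hno
        exact hnm (Stmt6Aux.meagre_mono hWm hno)
      obtain ⟨c, ⟨hcQ, hcW⟩, hcs⟩ := hex
      refine ⟨c, hcQ, ?_⟩
      by_contra hcUj
      exact hcs (Or.inr ⟨hcW, hcUj⟩)
    have hWUi : W ⊆ @interior _ (pointwiseTop Ω) Ui :=
      @interior_maximal _ (pointwiseTop Ω) _ _ (hWsub.trans hcl) hWo
    have hsub2 : Uj \ @interior _ (pointwiseTop Ω) Ui ⊆ symmDiff Uj W := by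
      rintro c ⟨hcUj, hcint⟩
      exact Or.inl ⟨hcUj, fun hcW => hcint (hWUi hcW)⟩
    exact Stmt6Aux.meagre_mono hWm hsub2
  -- the meagre set of "bad" points
  set S : Set (Set (Ω → Ω)) :=
    (fun p : Set (Ω → Ω) × Set (Ω → Ω) => p.2 \ @interior _ (pointwiseTop Ω) p.1) ''
      ((B ×ˢ B) ∩ {p | closure p.2 ⊆ p.1}) with hS
  have hSc : S.Countable := ((hBc.prod hBc).mono Set.inter_subset_left).image _
  set Bad : Set (Ω → Ω) := ⋃₀ S with hBad
  have hBadm : @IsMeagre _ (pointwiseTop Ω) Bad := by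
    refine @Stmt6Aux.meager_sUnion _ (pointwiseTop Ω) _ hSc ?_
    rintro A ⟨⟨Ui, Uj⟩, ⟨⟨hUiB, hUjB⟩, hclp⟩, rfl⟩
    exact hcore Ui Uj (hBbasis.isOpen hUiB) (hBbasis.isOpen hUjB) hclp
  -- points outside Bad are points of pointwise-to-T continuity
  have hgood : ∀ m : Ω → Ω, m ∉ Bad → ∀ U : Set (Ω → Ω), IsOpen U → m ∈ U →
      ∃ F : Finset Ω, Stmt6Aux.box m F ⊆ U := by
    intro m hmBad U hUo hmU
    obtain ⟨Ui, hUiB, hmUi, hUiU⟩ := hBbasis.exists_subset_of_mem_open hmU hUo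
    have hUj : ∃ Uj, Uj ∈ B ∧ m ∈ Uj ∧ closure Uj ⊆ Ui := by
      have hnb : Ui ∈ 𝓝 m := (hBbasis.isOpen hUiB).mem_nhds hmUi
      obtain ⟨t, htm, htc, hts⟩ := exists_mem_nhds_isClosed_subset hnb
      obtain ⟨Uj, hUjB, hmUj, hUjsub⟩ := hBbasis.exists_subset_of_mem_open
        (mem_interior_iff_mem_nhds.2 htm) isOpen_interior
      exact ⟨Uj, hUjB, hmUj,
        (closure_minimal (hUjsub.trans interior_subset) htc).trans hts⟩
    obtain ⟨Uj, hUjB, hmUj, hUjcl⟩ := hUj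
    have hmem : Uj \ @interior _ (pointwiseTop Ω) Ui ∈ S :=
      ⟨(Ui, Uj), ⟨⟨hUiB, hUjB⟩, hUjcl⟩, rfl⟩
    have hmint : m ∈ @interior _ (pointwiseTop Ω) Ui := by
      by_contra hmint
      exact hmBad ⟨Uj \ @interior _ (pointwiseTop Ω) Ui, hmem, hmUj, hmint⟩
    obtain ⟨F, hF⟩ := @Stmt6Aux.exists_box_subset Ω ⊥ hdisc _
      (@isOpen_interior _ (pointwiseTop Ω) Ui) m hmint
    exact ⟨F, hF.trans ((@interior_subset _ (pointwiseTop Ω) Ui).trans hUiU)⟩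
  -- pick a surjective good point
  have hpick : (({z : Ω → Ω | Function.Surjective z}) ∩ Badᶜ).Nonempty := by
    have h1 : {z : Ω → Ω | Function.Surjective z} ∈ @residual _ (pointwiseTop Ω) :=
      @Stmt6Aux.surjective_residual Ω ⊥ hdisc _ _
    have h2 : Badᶜ ∈ @residual _ (pointwiseTop Ω) := hBadm
    have hd : @Dense _ (pointwiseTop Ω) ({z : Ω → Ω | Function.Surjective z} ∩ Badᶜ) :=
      @dense_of_mem_residual _ (pointwiseTop Ω) hBaire _ (Filter.inter_mem h1 h2)
    exact @Dense.nonempty _ (pointwiseTop Ω) _ _ hd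
  obtain ⟨m, hmS, hmBad⟩ := hpick
  -- transfer continuity from `m` to an arbitrary point
  have key : ∀ U : Set (Ω → Ω), IsOpen U → ∀ x ∈ U,
      ∃ V : Set (Ω → Ω), IsOpen[pointwiseTop Ω] V ∧ x ∈ V ∧ V ⊆ U := by
    intro U hUo x hxU
    obtain ⟨g, s, hgs, hgx⟩ := Stmt6Aux.gs_exists e x
    set h : Ω → Ω := fun a => Function.surjInv hmS (e.symm (2 * e a)) with hh
    have hinj_h : Function.Injective h := by
      intro a b hab
      have := Function.injective_surjInv hmS hab
      exact hEveninj this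
    have hmh : ∀ a, m (h a) = e.symm (2 * e a) := fun a =>
      Function.surjInv_eq hmS _
    have hKm : (fun z : Ω → Ω => g ∘ z ∘ h) m = x := by
      funext a
      show g (m (h a)) = x a
      rw [hmh a]
      exact hgx a
    have hKT : Continuous (fun z : Ω → Ω => g ∘ z ∘ h) :=
      Continuous.comp (hsemi g).1 (hsemi h).2
    have hKU : IsOpen ((fun z : Ω → Ω => g ∘ z ∘ h) ⁻¹' U) :=
      hKT.isOpen_preimage U hUo
    have hmKU : m ∈ (fun z : Ω → Ω => g ∘ z ∘ h) ⁻¹' U := by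
      show (fun z : Ω → Ω => g ∘ z ∘ h) m ∈ U
      rw [hKm]; exact hxU
    obtain ⟨F, hF⟩ := hgood m hmBad _ hKU hmKU
    refine ⟨Stmt6Aux.box x (F.preimage h hinj_h.injOn),
      @Stmt6Aux.isOpen_box Ω ⊥ hdisc x _, Stmt6Aux.mem_box_self x _, ?_⟩
    intro y hy
    have hy' : ∀ a, h a ∈ F → y a = g (m (h a)) := by
      intro a ha
      rw [hmh a, hgx a]
      exact hy a (Finset.mem_preimage.2 ha)
    obtain ⟨z, hzF, hKz⟩ := Stmt6Aux.keyOpen g h s hgs hinj_h m F y hy'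
    have hzU : (fun z : Ω → Ω => g ∘ z ∘ h) z ∈ U := hF (fun c hc => hzF c hc)
    rw [show (fun z : Ω → Ω => g ∘ z ∘ h) z = g ∘ z ∘ h from rfl, hKz] at hzU
    exact hzU
  have key2 : ∀ U : Set (Ω → Ω), IsOpen U → IsOpen[pointwiseTop Ω] U := by
    intro U hUo
    rw [@isOpen_iff_forall_mem_open _ (pointwiseTop Ω) _]
    intro x hx
    obtain ⟨V, hVo, hxV, hVU⟩ := key U hUo x hx
    exact ⟨V, hVU, hVo, hxV⟩
  exact le_antisymm hle (isOpen_implies_isOpen_iff.1 key2)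
end

section
/- Let Ω be an uncountable set. Then Ω^Ω does not admit a separable T₁ topology with respect to which it is a semitopological semigroup; that is, if T is a T₁ topology on Ω^Ω making Ω^Ω a semitopological semigroup, then T is not separable. -/
open Topology

theorem stmt7 {Ω : Type*} [Uncountable Ω]
    (T : TopologicalSpace (Ω → Ω))
    (hT1 : @T1Space (Ω → Ω) T)
    (hsemi : ∀ s : Ω → Ω,
      Continuous[T, T] (fun x : Ω → Ω => s ∘ x) ∧
      Continuous[T, T] (fun x : Ω → Ω => x ∘ s)) :
    ¬ @TopologicalSpace.SeparableSpace (Ω → Ω) T := by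
  letI := T
  intro hsep
  obtain ⟨w0, w1, hw⟩ := exists_pair_ne Ω
  set a : Ω := w0 with ha
  obtain ⟨D, hDc, hDd⟩ := hsep.exists_countable_dense
  have key : ∀ ω : Ω, ∃ d ∈ D, d a = ω := by
    intro ω
    classical
    set s : Ω → Ω := fun z => if z = ω then w0 else w1 with hs
    have hcont : Continuous fun x : Ω → Ω => s ∘ x ∘ (fun _ : Ω => a) := by
      have h1 := (hsemi s).1
      have h2 := (hsemi (fun _ : Ω => a)).2
      exact h1.comp h2
    have hset : {x : Ω → Ω | x a = ω}
        = (fun x : Ω → Ω => s ∘ x ∘ (fun _ : Ω => a)) ⁻¹' {(fun _ : Ω => w1)}ᶜ := by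
      ext x
      simp only [Set.mem_setOf_eq, Set.mem_preimage, Set.mem_compl_iff,
        Set.mem_singleton_iff]
      constructor
      · intro hx heq
        have := congrFun heq a
        simp only [Function.comp_apply, hs, hx, if_pos rfl] at this
        exact hw this
      · intro hne
        by_contra hxa
        apply hne
        funext z
        simp only [Function.comp_apply, hs, if_neg hxa]
    have hopen : IsOpen {x : Ω → Ω | x a = ω} := by
      rw [hset]
      exact hcont.isOpen_preimage _ isClosed_singleton.isOpen_compl
    have hne : {x : Ω → Ω | x a = ω}.Nonempty := ⟨fun _ => ω, rfl⟩
    obtain ⟨d, hd1, hd2⟩ := hDd.inter_open_nonempty _ hopen hne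
    exact ⟨d, hd2, hd1⟩
  choose d hdD hda using key
  have hinj : Function.Injective d := fun ω₁ ω₂ h => by
    rw [← hda ω₁, ← hda ω₂, h]
  haveI : Countable D := hDc.to_subtype
  have : Countable Ω :=
    Function.Injective.countable (f := fun ω => (⟨d ω, hdD ω⟩ : D))
      (fun ω₁ ω₂ h => hinj (congrArg Subtype.val h))
  exact (not_countable : ¬Countable Ω) this
end

section
/- Let Ω be a set, and suppose that Ω^Ω is a semitopological semigroup with respect to some topology. Suppose that f, g ∈ Ω^Ω have the property that there exist b₀, …, b_n ∈ Ω^Ω and injective a₀, …, a_n ∈ Ω^Ω such that b₀(Ω) ∪ ⋯ ∪ b_n(Ω) = Ω and b₀ g a₀ = ⋯ = b_n g a_n = f, where b g a denotes the composite applying b first, then g, then a. If f is an isolated point, then so is g. -/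
open Topology

theorem stmt9 {Ω : Type*} [TopologicalSpace (Ω → Ω)]
    (hsemi : ∀ s : Ω → Ω,
      Continuous (fun x : Ω → Ω => s ∘ x) ∧
      Continuous (fun x : Ω → Ω => x ∘ s))
    (f g : Ω → Ω) (n : ℕ) (b a : Fin (n + 1) → Ω → Ω)
    (ha : ∀ i, Function.Injective (a i))
    (hcover : (⋃ i, Set.range (b i)) = Set.univ)
    (hcomp : ∀ i, a i ∘ g ∘ b i = f)
    (hf : IsOpen ({f} : Set (Ω → Ω))) :
    IsOpen ({g} : Set (Ω → Ω)) := by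
  have key : ({g} : Set (Ω → Ω)) =
      ⋂ i, (fun x : Ω → Ω => a i ∘ x ∘ b i) ⁻¹' {f} := by
    ext x
    simp only [Set.mem_singleton_iff, Set.mem_iInter, Set.mem_preimage]
    constructor
    · rintro rfl i; exact hcomp i
    · intro h
      funext ω
      have hω : ω ∈ ⋃ i, Set.range (b i) := by rw [hcover]; trivial
      obtain ⟨_, ⟨i, rfl⟩, ⟨y, rfl⟩⟩ := hω
      have h1 : a i (x (b i y)) = a i (g (b i y)) := by
        have := (h i).trans (hcomp i).symm
        exact congrFun this y
      exact ha i h1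
  rw [key]
  exact isOpen_iInter_of_finite fun i => by
    have hc : Continuous (fun x : Ω → Ω => a i ∘ x ∘ b i) :=
      (hsemi (a i)).1.comp (hsemi (b i)).2
    exact hc.isOpen_preimage _ hf
end

section
/- Let Ω be a nonempty set, and suppose that Ω^Ω is a semitopological semigroup with respect to some topology. Let f, g ∈ Ω^Ω be such that there is a bijection p from the set of kernel classes of g to the set of kernel classes of f with the property that |p(Σ)| ≥ |Σ| for each kernel class Σ of g. If f is an isolated point, then so is g. -/
open Topology

/-- The set of kernel classes (nonempty fibers) of `f`. -/
def kernelClasses {Ω : Type*} (f : Ω → Ω) : Set (Set Ω) :=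
  {C : Set Ω | C.Nonempty ∧ ∃ β : Ω, C = f ⁻¹' {β}}

theorem stmt10 {Ω : Type*} [Nonempty Ω] [TopologicalSpace (Ω → Ω)]
    (hsemi : ∀ s : Ω → Ω,
      Continuous (fun x : Ω → Ω => s ∘ x) ∧
      Continuous (fun x : Ω → Ω => x ∘ s))
    (f g : Ω → Ω) (p : Set Ω → Set Ω)
    (hbij : Set.BijOn p (kernelClasses g) (kernelClasses f))
    (hcard : ∀ C ∈ kernelClasses g, Cardinal.mk C ≤ Cardinal.mk (p C))
    (hf : IsOpen ({f} : Set (Ω → Ω))) :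
    IsOpen ({g} : Set (Ω → Ω)) := by
  classical
  by_cases hsub : ∀ a b : Ω, a = b
  · have hg : ({g} : Set (Ω → Ω)) = Set.univ := by
      ext h
      simp only [Set.mem_singleton_iff, Set.mem_univ, iff_true]
      funext x; exact hsub _ _
    rw [hg]; exact isOpen_univ
  push_neg at hsub
  obtain ⟨d₀, d₁, hd⟩ := hsub
  -- kernel classes of g
  have hkg : ∀ β ∈ Set.range g, g ⁻¹' {β} ∈ kernelClasses g := by
    rintro β ⟨a, rfl⟩
    exact ⟨⟨a, rfl⟩, g a, rfl⟩
  -- the map τ on values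
  have hτex : ∀ β : Ω, ∃ c, β ∈ Set.range g → p (g ⁻¹' {β}) = f ⁻¹' {c} := by
    intro β
    by_cases hβ : β ∈ Set.range g
    · obtain ⟨c, hc⟩ := (hbij.mapsTo (hkg β hβ)).2
      exact ⟨c, fun _ => hc⟩
    · exact ⟨d₀, fun h => absurd h hβ⟩
  choose τ hτ using hτex
  have hτinj : Set.InjOn τ (Set.range g) := by
    intro β₁ h₁ β₂ h₂ he
    have hpp : p (g ⁻¹' {β₁}) = p (g ⁻¹' {β₂}) := by
      rw [hτ β₁ h₁, hτ β₂ h₂, he]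
    have hSig : g ⁻¹' {β₁} = g ⁻¹' {β₂} := hbij.injOn (hkg _ h₁) (hkg _ h₂) hpp
    obtain ⟨a, rfl⟩ := h₁
    have ha : a ∈ g ⁻¹' {g a} := rfl
    rw [hSig] at ha
    simpa using ha
  -- every point lies in some p-class
  have hP : ∀ x : Ω, ∃ β, β ∈ Set.range g ∧ x ∈ p (g ⁻¹' {β}) := by
    intro x
    have hx : f ⁻¹' {f x} ∈ kernelClasses f := ⟨⟨x, rfl⟩, f x, rfl⟩
    obtain ⟨C, hC, hpC⟩ := hbij.surjOn hx
    obtain ⟨⟨a, ha⟩, β, rfl⟩ := hC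
    refine ⟨β, ⟨a, by simpa using ha⟩, ?_⟩
    rw [hpC]; exact rfl
  choose b hb1 hb2 using hP
  -- surjections from p-classes to g-classes
  have key : ∀ β, β ∈ Set.range g → ∃ r : Ω → Ω,
      (∀ x ∈ p (g ⁻¹' {β}), r x ∈ g ⁻¹' {β}) ∧
      (∀ y ∈ g ⁻¹' {β}, ∃ x ∈ p (g ⁻¹' {β}), r x = y) := by
    intro β hβ
    obtain ⟨e⟩ := (Cardinal.le_def _ _).mp (hcard _ (hkg β hβ))
    have hne : Nonempty (g ⁻¹' {β} : Set Ω) := by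
      obtain ⟨a, ha⟩ := hβ; exact ⟨⟨a, by simp [ha]⟩⟩
    refine ⟨fun x => if hx : x ∈ p (g ⁻¹' {β}) then (↑(Function.invFun ⇑e ⟨x, hx⟩) : Ω) else d₀,
      ?_, ?_⟩
    · intro x hx
      simp only [dif_pos hx]
      exact (Function.invFun ⇑e ⟨x, hx⟩).2
    · intro y hy
      refine ⟨(e ⟨y, hy⟩ : Ω), (e ⟨y, hy⟩).2, ?_⟩
      simp only [dif_pos (e ⟨y, hy⟩).2]
      have h1 : (⟨(e ⟨y, hy⟩ : Ω), (e ⟨y, hy⟩).2⟩ : (p (g ⁻¹' {β}) : Set Ω)) = e ⟨y, hy⟩ := rfl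
      rw [h1, Function.leftInverse_invFun e.injective ⟨y, hy⟩]
  choose r hr1 hr2 using key
  have hrcongr : ∀ β β' (h : β ∈ Set.range g) (h' : β' ∈ Set.range g), β = β' →
      ∀ x, r β h x = r β' h' x := by
    rintro β β' h h' rfl x; rfl
  set u : Ω → Ω := fun x => r (b x) (hb1 x) x with hu_def
  have hgu : ∀ x, g (u x) = b x := by
    intro x
    have := hr1 (b x) (hb1 x) x (hb2 x)
    simpa using this
  have hfx : ∀ x, f x = τ (b x) := by
    intro x
    have hx := hb2 x
    rw [hτ (b x) (hb1 x)] at hx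
    simpa using hx
  have husurj : ∀ y, ∃ x, u x = y := by
    intro y
    have hy : g y ∈ Set.range g := ⟨y, rfl⟩
    obtain ⟨x, hxP, hxr⟩ := hr2 (g y) hy y rfl
    have hbx : b x = g y := by
      apply hτinj (hb1 x) hy
      have h2 : f x = τ (g y) := by
        rw [hτ (g y) hy] at hxP
        simpa using hxP
      rw [← hfx x, h2]
    refine ⟨x, ?_⟩
    show r (b x) (hb1 x) x = y
    rw [hrcongr (b x) (g y) (hb1 x) hy hbx x]
    exact hxr
  set w : Ω → Ω → Ω := fun d z => if z ∈ Set.range g then τ z else d with hw_def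
  have hw : ∀ d x, w d (g (u x)) = f x := by
    intro d x
    rw [hgu x]
    show (if b x ∈ Set.range g then τ (b x) else d) = f x
    rw [if_pos (hb1 x), ← hfx x]
  have hwr : ∀ d z, z ∈ Set.range g → w d z = τ z := by
    intro d z hz
    show (if z ∈ Set.range g then τ z else d) = τ z
    rw [if_pos hz]
  have hwn : ∀ d z, z ∉ Set.range g → w d z = d := by
    intro d z hz
    show (if z ∈ Set.range g then τ z else d) = d
    rw [if_neg hz]
  have hset : ({g} : Set (Ω → Ω)) =
      (fun h : Ω → Ω => w d₀ ∘ h ∘ u) ⁻¹' {f} ∩ (fun h : Ω → Ω => w d₁ ∘ h ∘ u) ⁻¹' {f} := by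
    ext h
    simp only [Set.mem_singleton_iff, Set.mem_inter_iff, Set.mem_preimage]
    constructor
    · rintro rfl
      constructor <;> (funext x; exact hw _ x)
    · rintro ⟨h0, h1⟩
      funext y
      obtain ⟨x, rfl⟩ := husurj y
      have e0 : w d₀ (h (u x)) = f x := congrFun h0 x
      have e1 : w d₁ (h (u x)) = f x := congrFun h1 x
      have hgur : g (u x) ∈ Set.range g := ⟨u x, rfl⟩
      have hfτ : f x = τ (g (u x)) := by rw [hgu x, ← hfx x]
      by_cases hh : h (u x) ∈ Set.range g
      · apply hτinj hh hgur
        rw [← hwr d₀ _ hh, e0, hfτ]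
      · exfalso
        apply hd
        rw [← hwn d₀ _ hh, ← hwn d₁ _ hh, e0, e1]
  rw [hset]
  apply IsOpen.inter
  · exact ((hsemi (w d₀)).1.comp (hsemi u).2).isOpen_preimage _ hf
  · exact ((hsemi (w d₁)).1.comp (hsemi u).2).isOpen_preimage _ hf
end

section
/- Let Ω be an infinite set, let κ = cf(|Ω|) be the cofinality of the cardinal |Ω|, and suppose that Ω^Ω is a semitopological semigroup with respect to some topology. Then either there are no isolated points in Ω^Ω, or there are at least 2^κ isolated points. In particular, if |Ω| is a regular cardinal, then there are either no isolated points or exactly 2^{|Ω|} isolated points in Ω^Ω. -/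
open Topology Cardinal Set

section Aux

variable {Ω : Type u}

open Classical in
private noncomputable def swapFn {K : Type u} (S : Set K) (p : K × Bool) : K × Bool :=
  if p.1 ∈ S then (p.1, !p.2) else p

private lemma swapFn_invol {K : Type u} (S : Set K) (p : K × Bool) :
    swapFn S (swapFn S p) = p := by
  by_cases h : p.1 ∈ S <;> simp [swapFn, h]

open Classical in
private noncomputable def piFn {K : Type u} (J : K × Bool → Ω) (S : Set K) (z : Ω) : Ω :=
  if h : ∃ p, J p = z then J (swapFn S (Classical.choose h)) else z

private lemma piFn_apply {K : Type u} {J : K × Bool → Ω} (hJ : Function.Injective J)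
    (S : Set K) (p : K × Bool) : piFn J S (J p) = J (swapFn S p) := by
  have h : ∃ q, J q = J p := ⟨p, rfl⟩
  rw [piFn]
  rw [dif_pos h, hJ (Classical.choose_spec h)]

private lemma piFn_invol {K : Type u} {J : K × Bool → Ω} (hJ : Function.Injective J)
    (S : Set K) (z : Ω) : piFn J S (piFn J S z) = z := by
  by_cases h : ∃ p, J p = z
  · obtain ⟨p, rfl⟩ := h
    rw [piFn_apply hJ, piFn_apply hJ, swapFn_invol]
  · have h1 : piFn J S z = z := by rw [piFn]; exact dif_neg h
    rw [h1, h1]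


open Classical in
private noncomputable def a1 (f : Ω → Ω) (v₀ u₁ : Ω) : Ω → Ω :=
  fun z => if z = u₁ then v₀ else if z ∈ Set.range f ∧ z ≠ v₀ then z else u₁

open Classical in
private noncomputable def a2 (f : Ω → Ω) (u₁ : Ω) : Ω → Ω :=
  fun z => if z ∈ Set.range f then z else u₁

open Classical in
private noncomputable def beta1 (F B : Set Ω) (bb : Ω) : Ω → Ω :=
  fun ω => if ω ∈ F ∧ ω ∉ B then bb else ω

open Classical in
private noncomputable def beta2 (B : Set Ω) (cc : Ω) : Ω → Ω :=
  fun ω => if ω ∈ B then cc else ω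

open Classical in
private noncomputable def gA (B : Set Ω) (u₁ : Ω) (f : Ω → Ω) : Ω → Ω :=
  fun ω => if ω ∈ B then u₁ else f ω

private lemma keyA (f : Ω → Ω) (v₀ u₁ bb cc : Ω) (B : Set Ω)
    (hu₁ : u₁ ∉ Set.range f) (hv₀r : v₀ ∈ Set.range f)
    (hB : B ⊆ f ⁻¹' {v₀}) (hbB : bb ∈ B) (hcF : f cc = v₀) (hcB : cc ∉ B) (x : Ω → Ω) :
    (a1 f v₀ u₁ ∘ (x ∘ beta1 (f ⁻¹' {v₀}) B bb) = f ∧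
      a2 f u₁ ∘ (x ∘ beta2 B cc) = f) ↔ x = gA B u₁ f := by
  constructor
  · rintro ⟨h1, h2⟩
    funext α
    by_cases hαB : α ∈ B
    · have e1 := congrFun h1 α
      simp only [Function.comp_apply] at e1
      have hβ : beta1 (f ⁻¹' {v₀}) B bb α = α := by
        simp only [beta1]; exact if_neg (fun hh => hh.2 hαB)
      rw [hβ] at e1
      have hfα : f α = v₀ := hB hαB
      rw [hfα] at e1
      have hgoal : gA B u₁ f α = u₁ := by simp only [gA]; exact if_pos hαB
      rw [hgoal]
      simp only [a1] at e1
      split_ifs at e1 with hz1 hz2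
      · exact hz1
      · exact absurd e1 hz2.2
      · rw [← e1] at hv₀r
        exact absurd hv₀r hu₁
    · have e2 := congrFun h2 α
      simp only [Function.comp_apply] at e2
      have hβ : beta2 B cc α = α := by simp only [beta2]; exact if_neg hαB
      rw [hβ] at e2
      have hgoal : gA B u₁ f α = f α := by simp only [gA]; exact if_neg hαB
      rw [hgoal]
      simp only [a2] at e2
      split_ifs at e2 with hz
      · exact e2
      · exact absurd ⟨α, e2.symm⟩ hu₁
  · rintro rfl
    constructor
    · funext ω
      simp only [Function.comp_apply]
      by_cases h : ω ∈ f ⁻¹' {v₀} ∧ ω ∉ B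
      · have h1 : beta1 (f ⁻¹' {v₀}) B bb ω = bb := by simp only [beta1]; exact if_pos h
        have h2 : gA B u₁ f bb = u₁ := by simp only [gA]; exact if_pos hbB
        have h3 : a1 f v₀ u₁ u₁ = v₀ := by simp only [a1]; exact if_pos trivial
        rw [h1, h2, h3]
        exact (h.1 : f ω = v₀).symm
      · have h1 : beta1 (f ⁻¹' {v₀}) B bb ω = ω := by simp only [beta1]; exact if_neg h
        rw [h1]
        by_cases hωB : ω ∈ B
        · have h2 : gA B u₁ f ω = u₁ := by simp only [gA]; exact if_pos hωB
          have h3 : a1 f v₀ u₁ u₁ = v₀ := by simp only [a1]; exact if_pos trivial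
          rw [h2, h3]
          exact (hB hωB : f ω = v₀).symm
        · have hωF : f ω ≠ v₀ := fun hh => h ⟨hh, hωB⟩
          have h2 : gA B u₁ f ω = f ω := by simp only [gA]; exact if_neg hωB
          have h3 : a1 f v₀ u₁ (f ω) = f ω := by
            simp only [a1]
            rw [if_neg (fun hh : f ω = u₁ => hu₁ (hh ▸ ⟨ω, rfl⟩)),
              if_pos ⟨⟨ω, rfl⟩, hωF⟩]
          rw [h2, h3]
    · funext ω
      simp only [Function.comp_apply]
      by_cases hωB : ω ∈ B
      · have h1 : beta2 B cc ω = cc := by simp only [beta2]; exact if_pos hωB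
        have h2 : gA B u₁ f cc = f cc := by simp only [gA]; exact if_neg hcB
        have h3 : a2 f u₁ v₀ = v₀ := by simp only [a2]; exact if_pos hv₀r
        rw [h1, h2, hcF, h3]
        exact (hB hωB : f ω = v₀).symm
      · have h1 : beta2 B cc ω = ω := by simp only [beta2]; exact if_neg hωB
        have h2 : gA B u₁ f ω = f ω := by simp only [gA]; exact if_neg hωB
        have h3 : a2 f u₁ (f ω) = f ω := by simp only [a2]; exact if_pos ⟨ω, rfl⟩
        rw [h1, h2, h3]

variable [Infinite Ω] [TopologicalSpace (Ω → Ω)]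


private lemma caseB
    (hsemi : ∀ s : Ω → Ω,
      Continuous (fun x : Ω → Ω => s ∘ x) ∧ Continuous (fun x : Ω → Ω => x ∘ s))
    (f : Ω → Ω) (hf : IsOpen ({f} : Set (Ω → Ω)))
    (hκ : (#Ω).ord.cof ≤ #(Set.range f)) :
    (2 : Cardinal) ^ (#Ω).ord.cof ≤ #{g : Ω → Ω | IsOpen ({g} : Set (Ω → Ω))} := by
  classical
  set κ := (#Ω).ord.cof with hκdef
  have hκinf : ℵ₀ ≤ κ :=
    Ordinal.aleph0_le_cof.2 (Cardinal.isSuccLimit_ord (Cardinal.aleph0_le_mk Ω))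
  have hmk : #(κ.out × Bool) ≤ #(Set.range f) := by
    have : #(κ.out × Bool) = κ := by
      simp only [Cardinal.mk_prod, Cardinal.mk_out, Cardinal.mk_bool, Cardinal.lift_id,
        Cardinal.lift_uzero, Cardinal.lift_ofNat]
      exact Cardinal.mul_eq_left hκinf
        ((Cardinal.nat_lt_aleph0 2).le.trans hκinf) two_ne_zero
    rw [this]; exact hκ
  obtain ⟨j⟩ := (Cardinal.le_def _ _).1 hmk
  set J : κ.out × Bool → Ω := fun p => (j p : Ω) with hJdef
  have hJ : Function.Injective J := fun p q h => j.injective (Subtype.ext h)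
  have hJmem : ∀ p, J p ∈ Set.range f := fun p => (j p).2
  -- the isolated points
  set G : Set κ.out → (Ω → Ω) := fun S => piFn J S ∘ f with hGdef
  have hGopen : ∀ S, IsOpen ({G S} : Set (Ω → Ω)) := by
    intro S
    have hO : IsOpen ((fun x : Ω → Ω => piFn J S ∘ x) ⁻¹' {f}) :=
      hf.preimage (hsemi (piFn J S)).1
    have : ((fun x : Ω → Ω => piFn J S ∘ x) ⁻¹' {f}) = {G S} := by
      ext x
      simp only [Set.mem_preimage, Set.mem_singleton_iff]
      constructor
      · intro hx
        funext ω
        have hthis := congrFun hx ω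
        simp only [Function.comp_apply] at hthis
        have h2 : piFn J S (piFn J S (x ω)) = piFn J S (f ω) := by
          rw [hthis]
        rwa [piFn_invol hJ] at h2
      · rintro rfl
        funext ω
        exact piFn_invol hJ S (f ω)
    rwa [this] at hO
  have hGval : ∀ (S : Set κ.out) (α : κ.out) (ω : Ω) (hω : f ω = J (α, false)),
      G S ω = J (swapFn S (α, false)) := by
    intro S α ω hω
    show piFn J S (f ω) = _
    rw [hω, piFn_apply hJ]
  have hGinj : Function.Injective G := by
    intro S T hST
    ext α
    obtain ⟨ω, hω⟩ := hJmem (α, false)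
    have h1 := hGval S α ω hω
    have h2 := hGval T α ω hω
    rw [hST] at h1
    have h3 : swapFn S (α, false) = swapFn T (α, false) := hJ (h1.symm.trans h2)
    by_cases hS : α ∈ S <;> by_cases hT : α ∈ T <;>
      simp_all [swapFn]
  have hE : Function.Injective
      (fun S : Set κ.out => (⟨G S, hGopen S⟩ : {g : Ω → Ω | IsOpen ({g} : Set (Ω → Ω))})) := by
    intro S T h
    exact hGinj (congrArg Subtype.val h)
  calc (2 : Cardinal) ^ κ = #(Set κ.out) := by rw [Cardinal.mk_set, Cardinal.mk_out]
    _ ≤ _ := Cardinal.mk_le_of_injective hE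


private lemma caseA
    (hsemi : ∀ s : Ω → Ω,
      Continuous (fun x : Ω → Ω => s ∘ x) ∧ Continuous (fun x : Ω → Ω => x ∘ s))
    (f : Ω → Ω) (hf : IsOpen ({f} : Set (Ω → Ω)))
    (hμ : #(Set.range f) < (#Ω).ord.cof) :
    (2 : Cardinal) ^ (#Ω).ord.cof ≤ #{g : Ω → Ω | IsOpen ({g} : Set (Ω → Ω))} := by
  classical
  have hκΩ : (#Ω).ord.cof ≤ #Ω := Ordinal.cof_ord_le _
  have hμΩ : #(Set.range f) < #Ω := hμ.trans_le hκΩ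
  -- there is a fiber of full size
  obtain ⟨v₀, hv₀⟩ : ∃ v₀ : Ω, #(f ⁻¹' {v₀} : Set Ω) = #Ω := by
    by_contra hcon
    push_neg at hcon
    have hlt : ∀ v : Set.range f, #(f ⁻¹' {(v : Ω)} : Set Ω) < #Ω :=
      fun v => (Cardinal.mk_set_le _).lt_of_ne (hcon _)
    have hEq : #Ω = Cardinal.sum (fun v : Set.range f => #(f ⁻¹' {(v : Ω)} : Set Ω)) := by
      rw [← Cardinal.mk_sigma]
      exact Cardinal.mk_congr
        { toFun := fun ω => ⟨⟨f ω, ω, rfl⟩, ⟨ω, rfl⟩⟩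
          invFun := fun q => q.2.1
          left_inv := fun ω => rfl
          right_inv := by rintro ⟨⟨v, hv⟩, ω, (hω : f ω = v)⟩; subst hω; rfl }
    have hlt2 : Cardinal.sum (fun v : Set.range f => #(f ⁻¹' {(v : Ω)} : Set Ω)) < #Ω :=
      (Cardinal.sum_le_mk_mul_iSup _).trans_lt
        (Cardinal.mul_lt_of_lt (Cardinal.aleph0_le_mk Ω) hμΩ (Ordinal.iSup_lt hμ hlt))
    rw [← hEq] at hlt2
    exact lt_irrefl _ hlt2
  have hFinf : Infinite (f ⁻¹' {v₀} : Set Ω) :=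
    Cardinal.aleph0_le_mk_iff.1 (by rw [hv₀]; exact Cardinal.aleph0_le_mk Ω)
  obtain ⟨b, c, hbc⟩ := exists_pair_ne (f ⁻¹' {v₀} : Set Ω)
  have hfb : f (b : Ω) = v₀ := b.2
  have hfc : f (c : Ω) = v₀ := c.2
  have hbcΩ : (b : Ω) ≠ (c : Ω) := fun h => hbc (Subtype.ext h)
  have hv₀r : v₀ ∈ Set.range f := ⟨b, hfb⟩
  obtain ⟨u₁, hu₁⟩ : ∃ u, u ∉ Set.range f := by
    by_contra hcon
    push_neg at hcon
    have h1 : Set.range f = Set.univ := Set.eq_univ_of_forall hcon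
    rw [h1, Cardinal.mk_univ] at hμΩ
    exact lt_irrefl _ hμΩ
  set F₂ : Set Ω := (f ⁻¹' {v₀}) \ {(b : Ω), (c : Ω)} with hF₂def
  have hpairsub : ({(b : Ω), (c : Ω)} : Set Ω) ⊆ f ⁻¹' {v₀} := by
    intro x hx
    simp only [Set.mem_insert_iff, Set.mem_singleton_iff] at hx
    rcases hx with rfl | rfl
    · exact b.2
    · exact c.2
  have hF₂ : (#Ω).ord.cof ≤ #F₂ := by
    refine le_trans hκΩ ?_
    by_contra hcon
    push_neg at hcon
    have hpair : #({(b : Ω), (c : Ω)} : Set Ω) < #Ω := by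
      refine lt_of_le_of_lt (Cardinal.mk_insert_le.trans ?_)
        ((Cardinal.nat_lt_aleph0 2).trans_le (Cardinal.aleph0_le_mk Ω))
      rw [Cardinal.mk_singleton]
      norm_num
    have h3 := Cardinal.mk_diff_add_mk hpairsub
    have h4 : #(f ⁻¹' {v₀} : Set Ω) < #Ω := by
      rw [← h3]
      exact Cardinal.add_lt_of_lt (Cardinal.aleph0_le_mk Ω) hcon hpair
    rw [hv₀] at h4
    exact lt_irrefl _ h4
  -- the family of isolated points
  set G : Set (↥F₂) → (Ω → Ω) :=
    fun T => gA (insert (b : Ω) (Subtype.val '' T)) u₁ f with hGdef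
  have hBF : ∀ T : Set ↥F₂, insert (b : Ω) (Subtype.val '' T) ⊆ f ⁻¹' {v₀} := by
    rintro T x hx
    rcases hx with rfl | ⟨y, _, rfl⟩
    · exact b.2
    · exact y.2.1
  have hcB : ∀ T : Set ↥F₂, (c : Ω) ∉ insert (b : Ω) (Subtype.val '' T) := by
    rintro T (h | ⟨y, _, hyv⟩)
    · exact hbcΩ h.symm
    · refine y.2.2 ?_
      rw [hyv]
      exact Set.mem_insert_iff.2 (Or.inr rfl)
  have hGopen : ∀ T : Set (↥F₂), IsOpen ({G T} : Set (Ω → Ω)) := by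
    intro T
    set B : Set Ω := insert (b : Ω) (Subtype.val '' T) with hBdef
    have c1 : Continuous (fun x : Ω → Ω => a1 f v₀ u₁ ∘ (x ∘ beta1 (f ⁻¹' {v₀}) B (b : Ω))) :=
      ((hsemi (a1 f v₀ u₁)).1).comp ((hsemi (beta1 (f ⁻¹' {v₀}) B (b : Ω))).2)
    have c2 : Continuous (fun x : Ω → Ω => a2 f u₁ ∘ (x ∘ beta2 B (c : Ω))) :=
      ((hsemi (a2 f u₁)).1).comp ((hsemi (beta2 B (c : Ω))).2)
    have hkey :
        ((fun x : Ω → Ω => a1 f v₀ u₁ ∘ (x ∘ beta1 (f ⁻¹' {v₀}) B (b : Ω))) ⁻¹' {f}) ∩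
          ((fun x : Ω → Ω => a2 f u₁ ∘ (x ∘ beta2 B (c : Ω))) ⁻¹' {f}) = {G T} := by
      ext x
      simp only [Set.mem_inter_iff, Set.mem_preimage, Set.mem_singleton_iff]
      exact keyA f v₀ u₁ (b : Ω) (c : Ω) B hu₁ hv₀r (hBF T) (Set.mem_insert _ _) hfc (hcB T) x
    rw [← hkey]
    exact (hf.preimage c1).inter (hf.preimage c2)
  have hGsub : ∀ T₁ T₂ : Set ↥F₂, G T₁ = G T₂ → T₁ ⊆ T₂ := by
    intro T₁ T₂ h s hs
    have h1 : G T₁ (s : Ω) = u₁ := by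
      have hmem : (s : Ω) ∈ insert (b : Ω) (Subtype.val '' T₁) :=
        Set.mem_insert_iff.2 (Or.inr ⟨s, hs, rfl⟩)
      simp only [hGdef, gA]
      rw [if_pos hmem]
    rw [h] at h1
    simp only [hGdef, gA] at h1
    by_cases hB2 : (s : Ω) ∈ insert (b : Ω) (Subtype.val '' T₂)
    · rcases hB2 with heq | ⟨y, hy, hyv⟩
      · exact absurd (Set.mem_insert_iff.2 (Or.inl heq)) s.2.2
      · have : y = s := Subtype.ext hyv
        exact this ▸ hy
    · rw [if_neg hB2] at h1
      exact absurd (h1 ▸ (⟨s, rfl⟩ : f (s : Ω) ∈ Set.range f)) hu₁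
  have hGinj : Function.Injective G := fun T₁ T₂ h =>
    Set.Subset.antisymm (hGsub _ _ h) (hGsub _ _ h.symm)
  have hEinj : Function.Injective
      (fun T : Set ↥F₂ => (⟨G T, hGopen T⟩ : {g : Ω → Ω | IsOpen ({g} : Set (Ω → Ω))})) :=
    fun T₁ T₂ h => hGinj (congrArg Subtype.val h)
  calc (2 : Cardinal) ^ (#Ω).ord.cof
      ≤ 2 ^ #↥F₂ := Cardinal.power_le_power_left two_ne_zero hF₂
    _ = #(Set ↥F₂) := Cardinal.mk_set.symm
    _ ≤ _ := Cardinal.mk_le_of_injective hEinj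

end Aux

theorem stmt11_main {Ω : Type u} [Infinite Ω] [TopologicalSpace (Ω → Ω)]
    (hsemi : ∀ s : Ω → Ω,
      Continuous (fun x : Ω → Ω => s ∘ x) ∧
      Continuous (fun x : Ω → Ω => x ∘ s))
    (f : Ω → Ω) (hf : IsOpen ({f} : Set (Ω → Ω))) :
    (2 : Cardinal) ^ (#Ω).ord.cof ≤ #{g : Ω → Ω | IsOpen ({g} : Set (Ω → Ω))} := by
  classical
  rcases le_or_gt (#Ω).ord.cof #(Set.range f) with hκ | hμ
  · exact caseB hsemi f hf hκ
  · exact caseA hsemi f hf hμ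

theorem stmt11 {Ω : Type u} [Infinite Ω] [TopologicalSpace (Ω → Ω)]
    (hsemi : ∀ s : Ω → Ω,
      Continuous (fun x : Ω → Ω => s ∘ x) ∧
      Continuous (fun x : Ω → Ω => x ∘ s)) :
    ({f : Ω → Ω | IsOpen ({f} : Set (Ω → Ω))} = ∅ ∨
      (2 : Cardinal) ^ (Cardinal.mk Ω).ord.cof ≤
        Cardinal.mk {f : Ω → Ω | IsOpen ({f} : Set (Ω → Ω))}) ∧
    ((Cardinal.mk Ω).IsRegular →
      ({f : Ω → Ω | IsOpen ({f} : Set (Ω → Ω))} = ∅ ∨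
        Cardinal.mk {f : Ω → Ω | IsOpen ({f} : Set (Ω → Ω))} =
          2 ^ Cardinal.mk Ω)) := by
  have H1 : ({f : Ω → Ω | IsOpen ({f} : Set (Ω → Ω))} = ∅ ∨
      (2 : Cardinal) ^ (Cardinal.mk Ω).ord.cof ≤
        Cardinal.mk {f : Ω → Ω | IsOpen ({f} : Set (Ω → Ω))}) := by
    rcases Set.eq_empty_or_nonempty {f : Ω → Ω | IsOpen ({f} : Set (Ω → Ω))} with h | ⟨f, hf⟩
    · exact Or.inl h
    · exact Or.inr (stmt11_main hsemi f hf)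
  refine ⟨H1, fun hreg => ?_⟩
  rcases H1 with h | h
  · exact Or.inl h
  · right
    have hub : Cardinal.mk {f : Ω → Ω | IsOpen ({f} : Set (Ω → Ω))} ≤ 2 ^ Cardinal.mk Ω := by
      refine le_trans (Cardinal.mk_set_le _) ?_
      rw [← Cardinal.power_self_eq (Cardinal.aleph0_le_mk Ω), Cardinal.power_def]
    have hlb : (2 : Cardinal) ^ Cardinal.mk Ω ≤
        Cardinal.mk {f : Ω → Ω | IsOpen ({f} : Set (Ω → Ω))} := by
      rw [← hreg.cof_eq]
      exact h
    exact le_antisymm hub hlb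
end

section
/- Let Ω be an infinite set. Then every separable topology on Ω^Ω with respect to which Ω^Ω is a semitopological semigroup is perfect, i.e., has no isolated points. -/
open Topology

/-- In a separable space there is no uncountable family of pairwise disjoint
nonempty open sets. -/
lemma keyCount {X : Type*} [TopologicalSpace X]
    (hsep : TopologicalSpace.SeparableSpace X)
    (U : Set ℕ → Set X) (hopen : ∀ P, IsOpen (U P)) (hne : ∀ P, (U P).Nonempty)
    (hdisj : ∀ P Q : Set ℕ, P ≠ Q → Disjoint (U P) (U Q)) : False := by
  haveI := hsep
  obtain ⟨D, hDc, hDd⟩ := TopologicalSpace.exists_countable_dense X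
  have hx : ∀ P, ∃ x, x ∈ U P ∩ D := fun P =>
    hDd.inter_open_nonempty (U P) (hopen P) (hne P)
  choose g hg using hx
  haveI : Countable ↥D := hDc.to_subtype
  obtain ⟨i, hi⟩ := exists_injective_nat ↥D
  have hginj : Function.Injective fun P => i ⟨g P, (hg P).2⟩ := by
    intro P Q h
    by_contra hPQ
    have h' : g P = g Q := congrArg Subtype.val (hi h)
    exact Set.disjoint_left.mp (hdisj P Q hPQ) (hg P).1 (h' ▸ (hg Q).1)
  exact Function.cantor_injective _ hginj

theorem stmt12 {Ω : Type*} [Infinite Ω] [TopologicalSpace (Ω → Ω)]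
    (hsemi : ∀ s : Ω → Ω,
      Continuous (fun x : Ω → Ω => s ∘ x) ∧
      Continuous (fun x : Ω → Ω => x ∘ s))
    (hsep : TopologicalSpace.SeparableSpace (Ω → Ω)) :
    ∀ f : Ω → Ω, ¬ IsOpen ({f} : Set (Ω → Ω)) := by
  classical
  intro f hf
  by_cases hfib : ∃ c, {ω | f ω = c}.Infinite
  · -- Case B : some fiber of f is infinite
    obtain ⟨c, hF⟩ := hfib
    obtain ⟨c', hc'⟩ := exists_ne c
    let e := hF.natEmbedding
    let d : ℕ → Ω := fun n => (e n : Ω)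
    have hdinj : Function.Injective d := fun m n h => by
      have := e.injective (Subtype.ext h); exact this
    have hdF : ∀ n, f (d n) = c := fun n => (e n).2
    let S : Set ℕ → Set Ω := fun P => {z | z = d 3 ∨ ∃ n ∈ P, z = d (n + 4)}
    have hSF : ∀ P z, z ∈ S P → f z = c := by
      rintro P z (rfl | ⟨n, _, rfl⟩) <;> exact hdF _
    have hd3S : ∀ P, d 3 ∈ S P := fun P => Or.inl rfl
    have hd2S : ∀ P, d 2 ∉ S P := by
      rintro P (h | ⟨n, _, h⟩) <;> · have := hdinj h; omega
    have hd4S : ∀ P n, (d (n + 4) ∈ S P ↔ n ∈ P) := by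
      intro P n
      constructor
      · rintro (h | ⟨m, hm, h⟩)
        · have := hdinj h; omega
        · have := hdinj h
          have : n = m := by omega
          exact this ▸ hm
      · intro h; exact Or.inr ⟨n, h, rfl⟩
    let t2 : Set ℕ → Ω → Ω := fun P ω =>
      if f ω = c then (if ω ∈ S P then ω else d 3) else ω
    let t3 : Set ℕ → Ω → Ω := fun P ω =>
      if f ω = c then (if ω ∈ S P then d 2 else ω) else ω
    let s2 : Ω → Ω := fun z => if z = d 1 then c else if f z = c then c' else f z
    let s3 : Ω → Ω := fun z => if z = d 0 then c else if f z = c then c' else f z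
    have hs2c : ∀ y, s2 y = c → y = d 1 := by
      intro y h
      simp only [s2] at h
      split_ifs at h with h1 h2
      · exact h1
      · exact absurd h hc'
      · exact absurd h h2
    have hs3c : ∀ y, s3 y = c → y = d 0 := by
      intro y h
      simp only [s3] at h
      split_ifs at h with h1 h2
      · exact h1
      · exact absurd h hc'
      · exact absurd h h2
    let U : Set ℕ → Set (Ω → Ω) := fun P =>
      (fun x : Ω → Ω => s2 ∘ x ∘ t2 P) ⁻¹' {f} ∩
      (fun x : Ω → Ω => s3 ∘ x ∘ t3 P) ⁻¹' {f}
    have hopen : ∀ P, IsOpen (U P) := by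
      intro P
      have hcont2 : Continuous fun x : Ω → Ω => s2 ∘ x ∘ t2 P :=
        (hsemi s2).1.comp (hsemi (t2 P)).2
      have hcont3 : Continuous fun x : Ω → Ω => s3 ∘ x ∘ t3 P :=
        (hsemi s3).1.comp (hsemi (t3 P)).2
      exact (hcont2.isOpen_preimage _ hf).inter (hcont3.isOpen_preimage _ hf)
    have hne : ∀ P, (U P).Nonempty := by
      intro P
      refine ⟨fun ω => if f ω = c then (if ω ∈ S P then d 1 else d 0) else ω, ?_, ?_⟩
      · show s2 ∘ _ ∘ t2 P ∈ ({f} : Set (Ω → Ω))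
        rw [Set.mem_singleton_iff]
        funext ω
        by_cases hfc : f ω = c
        · have hz : t2 P ω ∈ S P := by
            simp only [t2, if_pos hfc]
            split_ifs with h
            · exact h
            · exact hd3S P
          have hfz : f (t2 P ω) = c := hSF P _ hz
          simp only [Function.comp_apply, if_pos hfz, if_pos hz]
          simp only [s2, if_pos rfl, hfc]
        · have ht : t2 P ω = ω := by simp only [t2, if_neg hfc]
          simp only [Function.comp_apply, ht, if_neg hfc]
          have hω1 : ω ≠ d 1 := fun h => hfc (h ▸ hdF 1)
          simp only [s2, if_neg hω1, if_neg hfc]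
      · show s3 ∘ _ ∘ t3 P ∈ ({f} : Set (Ω → Ω))
        rw [Set.mem_singleton_iff]
        funext ω
        by_cases hfc : f ω = c
        · have hz : t3 P ω ∉ S P ∧ f (t3 P ω) = c := by
            simp only [t3, if_pos hfc]
            split_ifs with h
            · exact ⟨hd2S P, hdF 2⟩
            · exact ⟨h, hfc⟩
          simp only [Function.comp_apply, if_pos hz.2, if_neg hz.1]
          simp only [s3, if_pos rfl, hfc]
        · have ht : t3 P ω = ω := by simp only [t3, if_neg hfc]
          simp only [Function.comp_apply, ht, if_neg hfc]
          have hω0 : ω ≠ d 0 := fun h => hfc (h ▸ hdF 0)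
          simp only [s3, if_neg hω0, if_neg hfc]
    have key : ∀ (P Q : Set ℕ) (x : Ω → Ω), x ∈ U P → x ∈ U Q →
        ∀ n, n ∈ P → n ∉ Q → False := by
      intro P Q x hxP hxQ n hnP hnQ
      set z := d (n + 4) with hzdef
      have hfz : f z = c := hdF _
      have hzSP : z ∈ S P := (hd4S P n).mpr hnP
      have hzSQ : z ∉ S Q := fun h => hnQ ((hd4S Q n).mp h)
      -- from x ∈ U P, first component at ω = z
      have h2 : s2 (x z) = c := by
        have := congrFun (Set.mem_singleton_iff.mp hxP.1) z
        simp only [Function.comp_apply, t2, if_pos hfz, if_pos hzSP] at this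
        rw [this, hfz]
      -- from x ∈ U Q, second component at ω = z
      have h3 : s3 (x z) = c := by
        have := congrFun (Set.mem_singleton_iff.mp hxQ.2) z
        simp only [Function.comp_apply, t3, if_pos hfz, if_neg hzSQ] at this
        rw [this, hfz]
      have e1 := hs2c _ h2
      have e2 := hs3c _ h3
      have : d 1 = d 0 := e1 ▸ e2
      have := hdinj this
      omega
    have hdisj : ∀ P Q : Set ℕ, P ≠ Q → Disjoint (U P) (U Q) := by
      intro P Q hPQ
      rw [Set.disjoint_left]
      intro x hxP hxQ
      have hex : ∃ n, ¬(n ∈ P ↔ n ∈ Q) := by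
        by_contra hcon
        push_neg at hcon
        exact hPQ (Set.ext fun n => hcon n)
      obtain ⟨n, hn⟩ := hex
      by_cases hnP : n ∈ P
      · by_cases hnQ : n ∈ Q
        · exact hn ⟨fun _ => hnQ, fun _ => hnP⟩
        · exact key P Q x hxP hxQ n hnP hnQ
      · by_cases hnQ : n ∈ Q
        · exact key Q P x hxQ hxP n hnQ hnP
        · exact hn ⟨fun h => absurd h hnP, fun h => absurd h hnQ⟩
    exact keyCount hsep U hopen hne hdisj
  · -- Case A : all fibers finite, so the range is infinite
    obtain ⟨c₁, c₂, hc12⟩ := exists_pair_ne Ω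
    have hr : (Set.range f).Infinite := by
      intro hfin
      have hsub : (Set.univ : Set Ω) ⊆ ⋃ v ∈ Set.range f, {ω | f ω = v} := by
        intro ω _
        exact Set.mem_biUnion (Set.mem_range_self ω) rfl
      have hUfin : (⋃ v ∈ Set.range f, {ω | f ω = v}).Finite := by
        refine Set.Finite.biUnion hfin ?_
        intro v _
        by_contra h
        exact hfib ⟨v, h⟩
      exact Set.infinite_univ (hUfin.subset hsub)
    let e := hr.natEmbedding
    let d : ℕ → Ω := fun n => (e n : Ω)
    have hdinj : Function.Injective d := fun m n h => by
      have := e.injective (Subtype.ext h); exact this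
    have hdr : ∀ n, d n ∈ Set.range f := fun n => (e n).2
    let j : Set ℕ → Ω → Ω := fun P z =>
      if h : ∃ n, d n = z then
        (if Classical.choose h ∈ P then d (2 * Classical.choose h + 1)
         else d (2 * Classical.choose h + 2))
      else z
    have hjd : ∀ P m, j P (d m) = if m ∈ P then d (2 * m + 1) else d (2 * m + 2) := by
      intro P m
      have h : ∃ n, d n = d m := ⟨m, rfl⟩
      have hcm : Classical.choose h = m := hdinj (Classical.choose_spec h)
      simp only [j, dif_pos h, hcm]
    have hjinj : ∀ P, Function.Injective (j P) := by
      intro P z z' hzz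
      by_cases h1 : ∃ n, d n = z <;> by_cases h2 : ∃ n, d n = z'
      · obtain ⟨m, rfl⟩ := h1
        obtain ⟨m', rfl⟩ := h2
        rw [hjd, hjd] at hzz
        split_ifs at hzz <;> · have := hdinj hzz; exact congrArg d (by omega)
      · obtain ⟨m, rfl⟩ := h1
        rw [hjd] at hzz
        simp only [j, dif_neg h2] at hzz
        exfalso
        apply h2
        split_ifs at hzz <;> exact ⟨_, hzz⟩
      · obtain ⟨m', rfl⟩ := h2
        rw [hjd] at hzz
        simp only [j, dif_neg h1] at hzz
        exfalso
        apply h1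
        split_ifs at hzz <;> exact ⟨_, hzz.symm⟩
      · simpa only [j, dif_neg h1, dif_neg h2] using hzz
    let s : Set ℕ → Ω → Ω → Ω := fun P cc z =>
      if h : ∃ w, j P w = z then Classical.choose h else cc
    have hs1 : ∀ P cc v, s P cc (j P v) = v := by
      intro P cc v
      have h : ∃ w, j P w = j P v := ⟨v, rfl⟩
      simp only [s, dif_pos h]
      exact hjinj P (Classical.choose_spec h)
    have hs2 : ∀ P v y, s P c₁ y = v → s P c₂ y = v → y = j P v := by
      intro P v y h1 h2
      by_cases h : ∃ w, j P w = y
      · have hw := Classical.choose_spec h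
        simp only [s, dif_pos h] at h1
        rw [← hw, h1]
      · simp only [s, dif_neg h] at h1 h2
        exact absurd (h1.trans h2.symm) hc12
    let U : Set ℕ → Set (Ω → Ω) := fun P =>
      (fun x : Ω → Ω => s P c₁ ∘ x) ⁻¹' {f} ∩
      (fun x : Ω → Ω => s P c₂ ∘ x) ⁻¹' {f}
    have hopen : ∀ P, IsOpen (U P) := fun P =>
      (((hsemi (s P c₁)).1).isOpen_preimage _ hf).inter
        (((hsemi (s P c₂)).1).isOpen_preimage _ hf)
    have hne : ∀ P, (U P).Nonempty := by
      intro P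
      refine ⟨j P ∘ f, ?_, ?_⟩ <;>
      · show _ ∈ ({f} : Set (Ω → Ω))
        rw [Set.mem_singleton_iff]
        funext ω
        exact hs1 P _ (f ω)
    have hdisj : ∀ P Q : Set ℕ, P ≠ Q → Disjoint (U P) (U Q) := by
      intro P Q hPQ
      rw [Set.disjoint_left]
      intro x hxP hxQ
      have hex : ∃ n, ¬(n ∈ P ↔ n ∈ Q) := by
        by_contra hcon
        push_neg at hcon
        exact hPQ (Set.ext fun n => hcon n)
      obtain ⟨n, hn⟩ := hex
      obtain ⟨ω, hω⟩ := hdr n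
      have e1 : x ω = j P (d n) := by
        refine hs2 P (d n) (x ω) ?_ ?_
        · have := congrFun (Set.mem_singleton_iff.mp hxP.1) ω
          simpa [hω] using this
        · have := congrFun (Set.mem_singleton_iff.mp hxP.2) ω
          simpa [hω] using this
      have e2 : x ω = j Q (d n) := by
        refine hs2 Q (d n) (x ω) ?_ ?_
        · have := congrFun (Set.mem_singleton_iff.mp hxQ.1) ω
          simpa [hω] using this
        · have := congrFun (Set.mem_singleton_iff.mp hxQ.2) ω
          simpa [hω] using this
      have e3 : j P (d n) = j Q (d n) := e1 ▸ e2
      rw [hjd, hjd] at e3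
      split_ifs at e3 with hp hq hq
      · exact hn ⟨fun _ => hq, fun _ => hp⟩
      · have := hdinj e3; omega
      · have := hdinj e3; omega
      · exact hn ⟨fun h => absurd h hp, fun h => absurd h hq⟩
    exact keyCount hsep U hopen hne hdisj
end

section
/- Let Ω be an infinite set with |Ω| a regular cardinal, let B be the collection of all sets of the form ∏_{α∈Ω} Σ_α = {f ∈ Ω^Ω : f(α) ∈ Σ_α for all α ∈ Ω}, where the Σ_α ⊆ Ω satisfy |{α ∈ Ω : β ∉ Σ_α}| < |Ω| for every β ∈ Ω, and let T be the topology on Ω^Ω generated by B. Then Ω^Ω is a topological semigroup with respect to T. -/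
open Topology TopologicalSpace

universe u

/-- The collection of sets `∏_{α ∈ Ω} Σ_α` with
`|{α : β ∉ Σ_α}| < |Ω|` for every `β`. -/
def bigBase (Ω : Type u) : Set (Set (Ω → Ω)) :=
  {X : Set (Ω → Ω) | ∃ sig : Ω → Set Ω,
    (∀ β : Ω, Cardinal.mk {α : Ω | β ∉ sig α} < Cardinal.mk Ω) ∧
    X = {f : Ω → Ω | ∀ α, f α ∈ sig α}}

theorem stmt13 {Ω : Type u} [Infinite Ω]
    (hreg : (Cardinal.mk Ω).IsRegular) :
    Continuous[@instTopologicalSpaceProd _ _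
        (generateFrom (bigBase Ω)) (generateFrom (bigBase Ω)),
      generateFrom (bigBase Ω)]
      (fun p : (Ω → Ω) × (Ω → Ω) => p.2 ∘ p.1) := by
  letI tΩ : TopologicalSpace (Ω → Ω) := generateFrom (bigBase Ω)
  have hκ : Cardinal.aleph0 ≤ Cardinal.mk Ω := hreg.aleph0_le
  rw [continuous_generateFrom_iff]
  rintro X ⟨Sg, hSg, rfl⟩
  rw [isOpen_prod_iff]
  rintro f g hfg
  simp only [Set.mem_preimage, Set.mem_setOf_eq, Function.comp_apply] at hfg
  obtain ⟨r, wo, hr⟩ := Cardinal.ord_eq Ω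
  haveI := wo
  -- the sets defining the neighbourhood of `g`
  set T : Ω → Set Ω := fun β =>
    {δ | (∀ α, f α = β → δ ∈ Sg α) ∧ (δ = g β ∨ r δ β ∨ δ = β)} with hT
  -- the sets defining the neighbourhood of `f`
  set Sg2 : Ω → Set Ω := fun α => {β | T β ⊆ Sg α} with hSg2
  have hseg : ∀ γ : Ω, Cardinal.mk {β : Ω | r β γ} < Cardinal.mk Ω := by
    intro γ
    have : Cardinal.mk {β // r β γ} < Cardinal.mk Ω := by
      rw [← Ordinal.card_typein]
      exact Cardinal.card_typein_lt (r := r) γ hr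
    exact this
  have hTsmall : ∀ γ : Ω, Cardinal.mk (T γ) < Cardinal.mk Ω := by
    intro γ
    have hsub : T γ ⊆ insert (g γ) (insert γ {β : Ω | r β γ}) := by
      rintro δ ⟨-, h | h | h⟩
      · exact Or.inl h
      · exact Or.inr (Or.inr h)
      · exact Or.inr (Or.inl h)
    refine lt_of_le_of_lt (Cardinal.mk_le_mk_of_subset hsub) ?_
    refine lt_of_le_of_lt Cardinal.mk_insert_le ?_
    refine Cardinal.add_lt_of_lt hκ ?_ (lt_of_lt_of_le Cardinal.one_lt_aleph0 hκ)
    refine lt_of_le_of_lt Cardinal.mk_insert_le ?_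
    exact Cardinal.add_lt_of_lt hκ (hseg γ) (lt_of_lt_of_le Cardinal.one_lt_aleph0 hκ)
  have hTbase : ∀ γ : Ω, Cardinal.mk {β : Ω | γ ∉ T β} < Cardinal.mk Ω := by
    intro γ
    have hsub : {β : Ω | γ ∉ T β} ⊆ (f '' {α | γ ∉ Sg α}) ∪ {β : Ω | r β γ} := by
      intro β hβ
      simp only [hT, Set.mem_setOf_eq, not_and_or] at hβ
      rcases hβ with h | h
      · push_neg at h
        obtain ⟨α, hα, hγ⟩ := h
        exact Or.inl ⟨α, hγ, hα⟩
      · push_neg at h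
        obtain ⟨h1, h2, h3⟩ := h
        rcases trichotomous_of r β γ with h | h | h
        · exact Or.inr h
        · exact absurd h.symm h3
        · exact absurd h h2
    refine lt_of_le_of_lt (Cardinal.mk_le_mk_of_subset hsub) ?_
    refine lt_of_le_of_lt (Cardinal.mk_union_le _ _) ?_
    refine Cardinal.add_lt_of_lt hκ ?_ (hseg γ)
    exact lt_of_le_of_lt (Cardinal.mk_image_le) (hSg γ)
  have hSg2base : ∀ γ : Ω, Cardinal.mk {α : Ω | γ ∉ Sg2 α} < Cardinal.mk Ω := by
    intro γ
    have hsub : {α : Ω | γ ∉ Sg2 α} ⊆ ⋃ δ : T γ, {α | (δ : Ω) ∉ Sg α} := by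
      intro α hα
      simp only [hSg2, Set.mem_setOf_eq, Set.not_subset] at hα
      obtain ⟨δ, hδT, hdS⟩ := hα
      exact Set.mem_iUnion.2 ⟨⟨δ, hδT⟩, hdS⟩
    refine lt_of_le_of_lt (Cardinal.mk_le_mk_of_subset hsub) ?_
    exact (Cardinal.card_iUnion_lt_iff_forall_of_isRegular hreg (hTsmall γ)).2
      fun δ => hSg (δ : Ω)
  refine ⟨{h : Ω → Ω | ∀ α, h α ∈ Sg2 α}, {k : Ω → Ω | ∀ β, k β ∈ T β}, ?_, ?_, ?_, ?_, ?_⟩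
  · exact isOpen_generateFrom_of_mem ⟨Sg2, hSg2base, rfl⟩
  · exact isOpen_generateFrom_of_mem ⟨T, hTbase, rfl⟩
  · -- f ∈ u
    intro α δ hδ
    exact hδ.1 α rfl
  · -- g ∈ v
    intro β
    exact ⟨fun α hα => hα ▸ hfg α, Or.inl rfl⟩
  · -- u ×ˢ v ⊆ preimage
    rintro ⟨h, k⟩ ⟨hh, hk⟩ α
    exact hh α (hk (h α))
end

section
/- Let Ω be an infinite set, and suppose that Ω^Ω is a semitopological semigroup with respect to some topology. Suppose there exist β ∈ Ω, a constant function f ∈ Ω^Ω, an open neighbourhood U of f, and subsets Σ_α ⊆ Ω (α ∈ Ω) such that U ⊆ ∏_{α∈Ω} Σ_α and |{α ∈ Ω : β ∉ Σ_α}| = |Ω|. Then f is an isolated point. -/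
open Topology

theorem stmt15 {Ω : Type u} [Infinite Ω] [TopologicalSpace (Ω → Ω)]
    (hsemi : ∀ s : Ω → Ω,
      Continuous (fun x : Ω → Ω => s ∘ x) ∧
      Continuous (fun x : Ω → Ω => x ∘ s))
    (β γ : Ω) (f : Ω → Ω) (hconst : f = fun _ => γ)
    (U : Set (Ω → Ω)) (hUopen : IsOpen U) (hfU : f ∈ U)
    (sig : Ω → Set Ω)
    (hsub : U ⊆ {g : Ω → Ω | ∀ α, g α ∈ sig α})
    (hcard : Cardinal.mk {α : Ω | β ∉ sig α} = Cardinal.mk Ω) :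
    IsOpen ({f} : Set (Ω → Ω)) := by
  classical
  obtain ⟨e⟩ : Nonempty ({α : Ω | β ∉ sig α} ≃ Ω) := Cardinal.eq.mp hcard
  -- f₂ : maps the set A = {α | β ∉ sig α} back to Ω via e
  set f₂ : Ω → Ω := fun α => if h : β ∉ sig α then e ⟨α, h⟩ else α with hf₂
  -- f₁ : fixes γ, sends everything else to β
  set f₁ : Ω → Ω := fun ζ => if ζ = γ then γ else β with hf₁
  set φ : (Ω → Ω) → (Ω → Ω) := fun x => f₁ ∘ (x ∘ f₂) with hφ
  have hcont : Continuous φ := (hsemi f₁).1.comp (hsemi f₂).2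
  have key : φ ⁻¹' U = {f} := by
    apply Set.eq_singleton_iff_unique_mem.mpr
    constructor
    · show φ f ∈ U
      have : φ f = f := by
        funext α
        simp [hφ, hf₁, hconst, Function.comp]
      rwa [this]
    · intro x hx
      by_contra hne
      have : ∃ δ, x δ ≠ γ := by
        by_contra h
        push_neg at h
        exact hne (funext fun δ => by rw [h δ, hconst])
      obtain ⟨δ, hδ⟩ := this
      set α : {α : Ω | β ∉ sig α} := e.symm δ with hα
      have hmem := hsub hx α.1
      have hf₂α : f₂ α.1 = δ := by
        have h1 : f₂ α.1 = e α := by rw [hf₂]; simp [α.2]; exact fun h => absurd h α.2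
        rw [h1, hα, Equiv.apply_symm_apply]
      have : φ x α.1 = β := by
        show f₁ (x (f₂ α.1)) = β
        rw [hf₂α, hf₁]
        exact if_neg hδ
      rw [this] at hmem
      exact α.2 hmem
  rw [← key]
  exact hUopen.preimage hcont
end

section
/- Let Ω be an infinite set, and suppose that Ω^Ω is a semitopological semigroup with respect to some topology. Let (Σ_α)_{α∈Ω} be a collection of pairwise disjoint nonempty subsets of Ω, and suppose that U ⊆ ∏_{α∈Ω} Σ_α is an open set. Then every element of U is an isolated point. -/
open Topology

theorem stmt16 {Ω : Type u} [Infinite Ω] [TopologicalSpace (Ω → Ω)]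
    (hsemi : ∀ s : Ω → Ω,
      Continuous (fun x : Ω → Ω => s ∘ x) ∧
      Continuous (fun x : Ω → Ω => x ∘ s))
    (sig : Ω → Set Ω)
    (hne : ∀ α : Ω, (sig α).Nonempty)
    (hdisj : ∀ α α' : Ω, α ≠ α' → Disjoint (sig α) (sig α'))
    (U : Set (Ω → Ω)) (hUopen : IsOpen U)
    (hsub : U ⊆ {g : Ω → Ω | ∀ α, g α ∈ sig α}) :
    ∀ f ∈ U, IsOpen ({f} : Set (Ω → Ω)) := by
  intro f hf
  have hfmem : ∀ α, f α ∈ sig α := hsub hf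
  -- f is injective
  have hfinj : Function.Injective f := by
    intro a b hab
    by_contra hne'
    exact Set.disjoint_left.mp (hdisj a b hne') (hfmem a) (hab ▸ hfmem b)
  -- for every β there is γ with β ∉ sig γ
  have havoid : ∀ β : Ω, ∃ γ : Ω, β ∉ sig γ := by
    intro β
    by_contra h
    push_neg at h
    obtain ⟨γ₁, γ₂, h12⟩ := exists_pair_ne Ω
    exact Set.disjoint_left.mp (hdisj γ₁ γ₂ h12) (h γ₁) (h γ₂)
  -- define the retraction r
  classical
  let r : Ω → Ω := fun β =>
    if h : ∃ α, f α = β then h.choose else (havoid β).choose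
  have hr_f : ∀ α, r (f α) = α := by
    intro α
    have h : ∃ a, f a = f α := ⟨α, rfl⟩
    have : r (f α) = h.choose := dif_pos h
    rw [this]
    exact hfinj h.choose_spec
  have hr_not : ∀ β, (¬ ∃ α, f α = β) → β ∉ sig (r β) := by
    intro β hβ
    have : r β = (havoid β).choose := dif_neg hβ
    rw [this]
    exact (havoid β).choose_spec
  -- {f} = U ∩ preimage of U under left translation by f ∘ r
  have hkey : ({f} : Set (Ω → Ω)) = U ∩ (fun x : Ω → Ω => (f ∘ r) ∘ x) ⁻¹' U := by
    ext x
    simp only [Set.mem_singleton_iff, Set.mem_inter_iff, Set.mem_preimage]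
    constructor
    · intro hxf
      have h2 : (f ∘ r) ∘ f = f := by
        funext α; simp [Function.comp, hr_f]
      rw [hxf]
      exact ⟨hf, by rw [h2]; exact hf⟩
    · rintro ⟨hxU, hxpre⟩
      have hx : ∀ α, x α ∈ sig α := hsub hxU
      have hcomp : ∀ α, f (r (x α)) ∈ sig α := hsub hxpre
      funext α
      -- r (x α) = α
      have hrα : r (x α) = α := by
        by_contra hne'
        exact Set.disjoint_left.mp (hdisj (r (x α)) α hne')
          (hfmem (r (x α))) (hcomp α)
      -- x α must be in the range of f
      by_cases hrange : ∃ a, f a = x α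
      · obtain ⟨a, ha⟩ := hrange
        have : r (x α) = a := by rw [← ha, hr_f]
        rw [hrα] at this
        rw [← ha, this]
      · have hn := hr_not (x α) hrange
        rw [hrα] at hn
        exact absurd (hx α) hn
  rw [hkey]
  exact hUopen.inter ((hsemi (f ∘ r)).1.isOpen_preimage U hUopen)
end

section
/- Let Ω be a set, and suppose that Ω^Ω is a semitopological semigroup with respect to some T₁ topology. If X ⊆ Ω^Ω is compact, then X is closed and the set {f(α) : f ∈ X} is finite for every α ∈ Ω. -/
open Topology

theorem stmt17 {Ω : Type*} [TopologicalSpace (Ω → Ω)] [T1Space (Ω → Ω)]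
    (hsemi : ∀ s : Ω → Ω,
      Continuous (fun x : Ω → Ω => s ∘ x) ∧
      Continuous (fun x : Ω → Ω => x ∘ s))
    (X : Set (Ω → Ω)) (hX : IsCompact X) :
    IsClosed X ∧ ∀ α : Ω, ((fun f : Ω → Ω => f α) '' X).Finite := by
  classical
  have hfin : ∀ α : Ω, ((fun f : Ω → Ω => f α) '' X).Finite := by
    intro α
    set E := (fun f : Ω → Ω => f α) '' X with hE
    by_cases hsub : E.Subsingleton
    · exact hsub.finite
    have hc : Continuous (fun x : Ω → Ω => x ∘ (fun _ : Ω => α)) := (hsemi _).2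
    set C := (fun x : Ω → Ω => x ∘ (fun _ : Ω => α)) '' X with hCdef
    have hC : IsCompact C := hX.image hc
    have hCE : C = (fun β : Ω => (fun _ : Ω => β)) '' E := by
      ext g
      constructor
      · rintro ⟨f, hf, rfl⟩; exact ⟨f α, ⟨f, hf, rfl⟩, rfl⟩
      · rintro ⟨β, ⟨f, hf, rfl⟩, rfl⟩; exact ⟨f, hf, rfl⟩
    -- every point of C is isolated in C
    have key : ∀ x ∈ C, ∃ U : Set (Ω → Ω), IsOpen U ∧ x ∈ U ∧ U ∩ C ⊆ {x} := by
      intro x hx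
      rw [hCE] at hx
      obtain ⟨β, hβ, rfl⟩ := hx
      obtain ⟨δ, hδ, hδβ⟩ : ∃ δ ∈ E, δ ≠ β := by
        by_contra h
        push_neg at h
        exact hsub fun a ha b hb => (h a ha).trans (h b hb).symm
      set s : Ω → Ω := fun γ => if γ = β then β else δ with hs
      refine ⟨(fun y : Ω → Ω => s ∘ y) ⁻¹' ({fun _ : Ω => δ} : Set (Ω → Ω))ᶜ,
        (isClosed_singleton.isOpen_compl).preimage (hsemi s).1, ?_, ?_⟩
      · intro hmem
        simp only [Set.mem_singleton_iff] at hmem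
        have := congrFun hmem α
        simp only [Function.comp, hs, if_pos rfl] at this
        exact hδβ this.symm
      · rintro y ⟨hyU, hyC⟩
        rw [hCE] at hyC
        obtain ⟨γ, hγ, rfl⟩ := hyC
        by_cases hγβ : γ = β
        · subst hγβ; rfl
        · exfalso
          apply hyU
          simp only [Set.mem_singleton_iff]
          funext ω
          simp [hs, hγβ]
    choose! U hUopen hUmem hUsub using key
    have hcover : C ⊆ ⋃ x ∈ C, U x := fun y hy =>
      Set.mem_biUnion hy (hUmem y hy)
    obtain ⟨t, htC, htfin, htcover⟩ := hC.elim_finite_subcover_image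
      (fun x hx => hUopen x hx) hcover
    have hCfin : C.Finite := by
      refine htfin.subset ?_
      intro y hy
      obtain ⟨x, hxt, hyx⟩ := Set.mem_iUnion₂.1 (htcover hy)
      have : y ∈ ({x} : Set (Ω → Ω)) := hUsub x (htC hxt) ⟨hyx, hy⟩
      rw [this]; exact hxt
    -- E injects into C
    have hinj : Set.InjOn (fun β : Ω => (fun _ : Ω => β)) E := by
      intro a _ b _ hab
      exact congrFun hab α
    exact Set.Finite.of_finite_image (hCE ▸ hCfin) hinj
  refine ⟨?_, hfin⟩
  refine isClosed_of_closure_subset fun f hf => ?_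
  have hXne : X.Nonempty := by
    by_contra h
    rw [Set.not_nonempty_iff_eq_empty] at h
    rw [h, closure_empty] at hf
    exact hf
  set T : Ω → Set (Ω → Ω) := fun α => {h | h α = f α} with hT
  have hTc : ∀ α, IsClosed (T α) := by
    intro α
    have heq : T α = (fun x : Ω → Ω => x ∘ (fun _ : Ω => α)) ⁻¹' {fun _ : Ω => f α} := by
      ext h
      simp only [hT, Set.mem_setOf_eq, Set.mem_preimage, Set.mem_singleton_iff,
        funext_iff, Function.comp]
      exact ⟨fun h' _ => h', fun h' => h' α⟩
    rw [heq]
    exact isClosed_singleton.preimage (hsemi _).2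
  have FIP : ∀ u : Finset Ω, (X ∩ ⋂ α ∈ u, T α).Nonempty := by
    intro u
    rcases u.eq_empty_or_nonempty with rfl | ⟨α₀, hα₀⟩
    · simpa using hXne
    set s : Ω → Ω := fun γ => if γ ∈ u then γ else α₀ with hs
    have hsmem : ∀ γ, s γ ∈ u := by
      intro γ
      by_cases h : γ ∈ u
      · simp [hs, h]
      · simp [hs, h, hα₀]
    have hsid : ∀ γ ∈ u, s γ = γ := fun γ h => by simp [hs, h]
    have hRc : Continuous (fun x : Ω → Ω => x ∘ s) := (hsemi s).2
    set R : Set (Ω → Ω) := (fun x : Ω → Ω => x ∘ s) '' X with hR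
    -- R is finite
    have hRfin : R.Finite := by
      set ψ : (Ω → Ω) → (↥u → Ω) := fun g i => g i with hψ
      have hψinj : Set.InjOn ψ R := by
        rintro _ ⟨h₁, _, rfl⟩ _ ⟨h₂, _, rfl⟩ hab
        funext γ
        have := congrFun hab ⟨s γ, hsmem γ⟩
        simpa [hψ, Function.comp, hsid _ (hsmem γ)] using this
      have himg : (ψ '' R).Finite := by
        have : ψ '' R ⊆ Set.pi Set.univ
            (fun i : ↥u => (fun f : Ω → Ω => f (i : Ω)) '' X) := by
          rintro _ ⟨_, ⟨h, hh, rfl⟩, rfl⟩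
          intro i _
          refine ⟨h, hh, ?_⟩
          simp [hψ, Function.comp, hsid _ i.2]
        exact (Set.Finite.pi (t := fun i : ↥u => (fun f : Ω → Ω => f (i : Ω)) '' X) fun i => hfin (i : Ω)).subset this
      exact Set.Finite.of_finite_image himg hψinj
    have hRclosed : IsClosed R := hRfin.isClosed
    have hfs : f ∘ s ∈ R := by
      have h1 : f ∘ s ∈ closure R := by
        apply image_closure_subset_closure_image hRc
        exact ⟨f, hf, rfl⟩
      rwa [hRclosed.closure_eq] at h1
    obtain ⟨h, hhX, hhs⟩ := hfs
    refine ⟨h, hhX, ?_⟩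
    rw [Set.mem_iInter₂]
    intro α hα
    have := congrFun hhs α
    simpa [Function.comp, hsid α hα, hT] using this
  obtain ⟨h, hhX, hh⟩ := hX.inter_iInter_nonempty T hTc FIP
  have : f = h := funext fun α => (Set.mem_iInter.1 hh α).symm
  rwa [this]
end

section
/- Let Ω be an infinite set, and suppose that Ω^Ω is a semitopological semigroup with respect to some locally compact T₁ topology T. Then any base for T has strictly more than |Ω| elements. -/
open Topology

theorem stmt18 {Ω : Type u} [Infinite Ω]
    [TopologicalSpace (Ω → Ω)] [T1Space (Ω → Ω)]
    (hsemi : ∀ s : Ω → Ω,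
      Continuous (fun x : Ω → Ω => s ∘ x) ∧
      Continuous (fun x : Ω → Ω => x ∘ s))
    (hloc : ∀ f : Ω → Ω, ∃ U K : Set (Ω → Ω),
      IsOpen U ∧ f ∈ U ∧ U ⊆ K ∧ IsCompact K)
    (C : Set (Set (Ω → Ω)))
    (hC : TopologicalSpace.IsTopologicalBasis C) :
    Cardinal.mk Ω < Cardinal.mk C := by
  classical
  -- Step 1: evaluation sets {x | x a = b} are open.
  have hE : ∀ a b : Ω, IsOpen {x : Ω → Ω | x a = b} := by
    intro a b
    obtain ⟨b', hb'⟩ := exists_ne b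
    set s : Ω → Ω := fun y => if y = b then b else b' with hs
    have hcont : Continuous fun x : Ω → Ω => s ∘ (x ∘ fun _ : Ω => a) :=
      (hsemi s).1.comp (hsemi (fun _ : Ω => a)).2
    have hclosed : IsClosed ((fun x : Ω → Ω => s ∘ (x ∘ fun _ : Ω => a)) ⁻¹' {fun _ => b'}) :=
      isClosed_singleton.preimage hcont
    have heq : {x : Ω → Ω | x a = b}
        = ((fun x : Ω → Ω => s ∘ (x ∘ fun _ : Ω => a)) ⁻¹' {fun _ => b'})ᶜ := by
      ext x
      simp only [Set.mem_setOf_eq, Set.mem_compl_iff, Set.mem_preimage, Set.mem_singleton_iff]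
      constructor
      · intro hx hfun
        have h2 := congrFun hfun a
        simp only [Function.comp_apply, hx, hs, if_pos rfl] at h2
        exact hb' h2.symm
      · intro hx
        by_contra hne
        apply hx
        funext z
        simp only [Function.comp_apply, hs, if_neg hne]
    rw [heq]
    exact hclosed.isOpen_compl
  -- Step 2: compact sets have finite projections.
  have himg : ∀ (K : Set (Ω → Ω)), IsCompact K → ∀ i : Ω,
      ((fun x : Ω → Ω => x i) '' K).Finite := by
    intro K hK i
    obtain ⟨T, hT⟩ := hK.elim_finite_subcover (fun b : Ω => {x : Ω → Ω | x i = b})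
      (fun b => hE i b) (fun x _ => Set.mem_iUnion.2 ⟨x i, rfl⟩)
    apply Set.Finite.subset T.finite_toSet
    rintro _ ⟨x, hx, rfl⟩
    have h3 := hT hx
    simp only [Set.mem_iUnion, Set.mem_setOf_eq] at h3
    obtain ⟨b, hb, hxb⟩ := h3
    simpa [hxb] using hb
  -- Step 3: diagonalization.
  by_contra hlt
  push_neg at hlt
  rw [Cardinal.le_def] at hlt
  obtain ⟨j⟩ := hlt
  obtain ⟨v, hvC, -, -⟩ :=
    hC.exists_subset_of_mem_open (Set.mem_univ (id : Ω → Ω)) isOpen_univ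
  haveI : Nonempty C := ⟨⟨v, hvC⟩⟩
  set σ : Ω → C := Function.invFun j with hσdef
  have hσ : Function.Surjective σ := Function.invFun_surjective j.injective
  set Vset : Ω → Set Ω := fun i => (fun x : Ω → Ω => x i) '' (σ i : Set (Ω → Ω)) with hV
  set f : Ω → Ω := fun i =>
    if h : ((Vset i)ᶜ).Nonempty then h.choose else Classical.arbitrary Ω with hf
  obtain ⟨U, K, hU, hfU, hUK, hK⟩ := hloc f
  obtain ⟨B, hBC, hfB, hBU⟩ := hC.exists_subset_of_mem_open hfU hU
  obtain ⟨i, hi⟩ := hσ ⟨B, hBC⟩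
  have hσiB : (σ i : Set (Ω → Ω)) = B := by rw [hi]
  have hVfin : (Vset i).Finite := by
    apply (himg K hK i).subset
    rintro _ ⟨x, hx, rfl⟩
    exact ⟨x, hUK (hBU (hσiB ▸ hx)), rfl⟩
  have hne : ((Vset i)ᶜ).Nonempty := hVfin.infinite_compl.nonempty
  have hfi : f i ∉ Vset i := by
    have : f i = hne.choose := by rw [hf]; simp [hne]
    rw [this]
    exact hne.choose_spec
  exact hfi ⟨f, by rw [hσiB]; exact hfB, rfl⟩
end

section
/- Let Ω be an infinite set such that the cofinality cf(|Ω|) of the cardinal |Ω| is uncountable, and suppose that Ω^Ω is a semitopological semigroup with respect to a locally compact topology T. Then T is either not perfect or not T₁; that is, T cannot be simultaneously perfect and T₁. -/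
open Topology Cardinal

theorem stmt19 {Ω : Type u} [Infinite Ω]
    (hcof : ℵ₀ < (Cardinal.mk Ω).ord.cof)
    [TopologicalSpace (Ω → Ω)]
    (hsemi : ∀ s : Ω → Ω,
      Continuous (fun x : Ω → Ω => s ∘ x) ∧
      Continuous (fun x : Ω → Ω => x ∘ s))
    (hloc : ∀ f : Ω → Ω, ∃ U K : Set (Ω → Ω),
      IsOpen U ∧ f ∈ U ∧ U ⊆ K ∧ IsCompact K) :
    ¬ ((∀ f : Ω → Ω, ¬ IsOpen ({f} : Set (Ω → Ω))) ∧ T1Space (Ω → Ω)) := by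
  classical
  rintro ⟨hperf, hT1⟩
  obtain ⟨β⟩ : Nonempty Ω := inferInstance
  set c : Ω → Ω := fun _ => β with hc
  -- Step 1: every coordinate-value set {x | x ω = b} is open.
  have hcoord : ∀ ω b : Ω, IsOpen {x : Ω → Ω | x ω = b} := by
    intro ω b
    obtain ⟨q, hq⟩ := exists_ne b
    have hcont : Continuous fun x : Ω → Ω =>
        (fun v : Ω => if v = b then b else q) ∘ (x ∘ fun _ : Ω => ω) := by
      have h1 := (hsemi (fun v : Ω => if v = b then b else q)).1
      have h2 := (hsemi (fun _ : Ω => ω)).2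
      simpa [Function.comp_def] using h1.comp h2
    have hclosed : IsClosed {x : Ω → Ω | ¬ x ω = b} := by
      have hkey : {x : Ω → Ω | ¬ x ω = b}
          = (fun x : Ω → Ω =>
              (fun v : Ω => if v = b then b else q) ∘ (x ∘ fun _ : Ω => ω)) ⁻¹'
            {fun _ : Ω => q} := by
        ext x
        simp only [Set.mem_setOf_eq, Set.mem_preimage, Set.mem_singleton_iff]
        constructor
        · intro h
          funext a
          show (if x ω = b then b else q) = q
          rw [if_neg h]
        · intro h hxb
          have h2 := congrFun h β
          have h3 : (if x ω = b then b else q) = q := h2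
          rw [if_pos hxb] at h3
          exact hq h3.symm
      rw [hkey]
      exact isClosed_singleton.preimage hcont
    have hcompl : {x : Ω → Ω | x ω = b} = {x : Ω → Ω | ¬ x ω = b}ᶜ := by
      ext x; simp
    rw [hcompl]
    exact hclosed.isOpen_compl
  -- Step 2: local compactness at the constant function c.
  obtain ⟨U, K, hUopen, hcU, hUK, hK⟩ := hloc c
  -- Step 3: all projections of K are finite.
  have hQ : ∀ ω : Ω, ∃ Q : Finset Ω, ∀ x ∈ K, x ω ∈ Q := by
    intro ω
    have hcov : K ⊆ ⋃ b : Ω, {x : Ω → Ω | x ω = b} := fun x _ =>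
      Set.mem_iUnion.2 ⟨x ω, rfl⟩
    obtain ⟨t, ht⟩ := hK.elim_finite_subcover (fun b : Ω => {x : Ω → Ω | x ω = b})
      (fun b => hcoord ω b) hcov
    refine ⟨t, fun x hx => ?_⟩
    obtain ⟨b, hb, hxb⟩ := Set.mem_iUnion₂.1 (ht hx)
    have hxb' : x ω = b := hxb
    rw [hxb']
    exact hb
  choose Q hQmem using hQ
  -- Step 4: values that fail to appear in Q ω for only < #Ω many ω form a finite set.
  set W : Ω → Set Ω := fun γ => {ω : Ω | γ ∉ Q ω} with hWdef
  set SM : Set Ω := {γ : Ω | γ ≠ β ∧ Cardinal.mk (W γ) < Cardinal.mk Ω} with hSMdef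
  have haleph : ℵ₀ < Cardinal.mk Ω := lt_of_lt_of_le hcof (Ordinal.cof_ord_le _)
  have hSMfin : SM.Finite := by
    by_contra hinf
    have hinf' : SM.Infinite := hinf
    set g : ℕ ↪ ↥SM := Set.Infinite.natEmbedding _ hinf' with hg
    have hmkULift : Cardinal.mk (ULift.{u} ℕ) = ℵ₀ := by
      simp [Cardinal.mk_uLift]
    have hiSup : (⨆ i : ULift.{u} ℕ, Cardinal.mk (W ((g i.down : Ω)))) < Cardinal.mk Ω := by
      apply Ordinal.iSup_lt
      · rw [hmkULift]; exact hcof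
      · intro i
        exact (g i.down).2.2
    have hUn : Cardinal.mk (⋃ i : ULift.{u} ℕ, W ((g i.down : Ω))) < Cardinal.mk Ω := by
      apply lt_of_le_of_lt (Cardinal.mk_iUnion_le _)
      apply Cardinal.mul_lt_of_lt haleph.le
      · rw [hmkULift]; exact haleph
      · exact hiSup
    have hne : (⋃ i : ULift.{u} ℕ, W ((g i.down : Ω))) ≠ Set.univ := by
      intro heq
      rw [heq, Cardinal.mk_univ] at hUn
      exact lt_irrefl _ hUn
    obtain ⟨ω₀, hω₀⟩ : ∃ ω₀ : Ω, ω₀ ∉ ⋃ i : ULift.{u} ℕ, W ((g i.down : Ω)) := by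
      by_contra h
      push_neg at h
      exact hne (Set.eq_univ_of_forall h)
    have hmem : ∀ n : ℕ, ((g n : Ω)) ∈ Q ω₀ := by
      intro n
      have h1 : ω₀ ∉ W ((g n : Ω)) := fun hw =>
        hω₀ (Set.mem_iUnion.2 ⟨ULift.up n, hw⟩)
      have h2 : ¬ ((g n : Ω) ∉ Q ω₀) := h1
      exact not_not.1 h2
    have hinj : Function.Injective fun n : ℕ => (g n : Ω) :=
      Subtype.coe_injective.comp g.injective
    have hinfrange : (Set.range fun n : ℕ => (g n : Ω)).Infinite :=
      Set.infinite_range_of_injective hinj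
    apply hinfrange
    apply Set.Finite.subset (Q ω₀).finite_toSet
    rintro x ⟨n, rfl⟩
    exact hmem n
  -- Step 5: the finite value set S and a fresh value v.
  set S : Finset Ω := insert β hSMfin.toFinset with hSdef
  have hβS : β ∈ S := Finset.mem_insert_self _ _
  obtain ⟨v, hv⟩ := Infinite.exists_notMem_finset S
  have hvβ : v ≠ β := fun h => hv (h ▸ hβS)
  have hvSM : v ∉ SM := fun h => hv (Finset.mem_insert_of_mem (hSMfin.mem_toFinset.2 h))
  have hWv : Cardinal.mk (W v) = Cardinal.mk Ω := by
    have hle : Cardinal.mk (W v) ≤ Cardinal.mk Ω := Cardinal.mk_set_le _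
    have hnlt : ¬ Cardinal.mk (W v) < Cardinal.mk Ω := fun hlt => hvSM ⟨hvβ, hlt⟩
    exact le_antisymm hle (not_lt.1 hnlt)
  obtain ⟨e⟩ : Nonempty (↥(W v) ≃ Ω) := Cardinal.eq.1 hWv
  -- Step 6: the squeezing translation: an open neighbourhood of c inside the box S^Ω.
  set t₂ : Ω → Ω := fun ω => if h : ω ∈ W v then e ⟨ω, h⟩ else β with ht₂def
  set s₂ : Ω → Ω := fun u => if u ∈ S then u else v with hs₂def
  have hcont2 : Continuous fun x : Ω → Ω => s₂ ∘ (x ∘ t₂) := by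
    have h1 := (hsemi s₂).1
    have h2 := (hsemi t₂).2
    simpa [Function.comp_def] using h1.comp h2
  set N : Set (Ω → Ω) := (fun x : Ω → Ω => s₂ ∘ (x ∘ t₂)) ⁻¹' U with hNdef
  have hNopen : IsOpen N := hUopen.preimage hcont2
  have hcN : c ∈ N := by
    have heq : s₂ ∘ (c ∘ t₂) = c := by
      funext a
      show s₂ (c (t₂ a)) = β
      have : c (t₂ a) = β := rfl
      rw [this]
      show (if β ∈ S then β else v) = β
      rw [if_pos hβS]
    show s₂ ∘ (c ∘ t₂) ∈ U
    rw [heq]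
    exact hcU
  have hbox : ∀ x ∈ N, ∀ a : Ω, x a ∈ S := by
    intro x hx a
    by_contra hxa
    set ωp : ↥(W v) := e.symm a with hωpdef
    have ht2a : t₂ (ωp : Ω) = a := by
      show (if h : (ωp : Ω) ∈ W v then e ⟨(ωp : Ω), h⟩ else β) = a
      rw [dif_pos ωp.2]
      have hsub : (⟨(ωp : Ω), ωp.2⟩ : ↥(W v)) = ωp := Subtype.ext rfl
      rw [hsub, hωpdef, Equiv.apply_symm_apply]
    have hxK : s₂ ∘ (x ∘ t₂) ∈ K := hUK hx
    have hmem := hQmem (ωp : Ω) _ hxK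
    have hmem2 : s₂ (x (t₂ (ωp : Ω))) ∈ Q (ωp : Ω) := hmem
    rw [ht2a] at hmem2
    have hs2v : s₂ (x a) = v := if_neg hxa
    rw [hs2v] at hmem2
    exact ωp.2 hmem2
  -- Step 7: descent. Any open neighbourhood of c inside a finite box gives a contradiction.
  have descent : ∀ n : ℕ, ∀ T : Finset Ω, T.card ≤ n → β ∈ T →
      ∀ O : Set (Ω → Ω), IsOpen O → c ∈ O → (∀ x ∈ O, ∀ a : Ω, x a ∈ T) → False := by
    intro n
    induction n with
    | zero =>
      intro T hcard hβT O _ _ _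
      have hpos : 0 < T.card := Finset.card_pos.2 ⟨β, hβT⟩
      omega
    | succ n ih =>
      intro T hcard hβT O hOopen hcO hObox
      by_cases hsing : ∀ γ ∈ T, γ = β
      · have hOsub : O = {c} := by
          apply Set.eq_singleton_iff_unique_mem.2
          refine ⟨hcO, fun x hx => ?_⟩
          funext a
          exact hsing _ (hObox x hx a)
        exact hperf c (hOsub ▸ hOopen)
      · push_neg at hsing
        obtain ⟨γ, hγT, hγβ⟩ := hsing
        obtain ⟨w, hw⟩ := Infinite.exists_notMem_finset T
        set t' : Ω → Ω := fun u => if u = γ then w else u with ht'def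
        refine ih (T.erase γ) ?_ (Finset.mem_erase.2 ⟨fun h => hγβ h.symm, hβT⟩)
          ((fun x : Ω → Ω => t' ∘ x) ⁻¹' O) (hOopen.preimage (hsemi t').1) ?_ ?_
        · have hce := Finset.card_erase_of_mem hγT
          omega
        · show t' ∘ c ∈ O
          have heq : t' ∘ c = c := by
            funext a
            show (if β = γ then w else β) = β
            rw [if_neg (fun h => hγβ h.symm)]
          rw [heq]
          exact hcO
        · intro x hx a
          have h1 : t' (x a) ∈ T := hObox _ hx a
          by_cases hxg : x a = γ
          · exfalso
            have h2 : t' (x a) = w := by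
              show (if x a = γ then w else x a) = w
              rw [if_pos hxg]
            rw [h2] at h1
            exact hw h1
          · refine Finset.mem_erase.2 ⟨hxg, ?_⟩
            have h2 : t' (x a) = x a := if_neg hxg
            rwa [h2] at h1
  exact descent S.card S le_rfl hβS N hNopen hcN hbox
end
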